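/- arXiv:2301.08650 — 7 statements merged into one kernel-verified Lean document; each statement's English description precedes it below -/
import Mathlib

section
/- Let C be a category, L : Psh(C) → Psh(C) a reflective localization of the presheaf category (of spaces, or of sets for a 1-categorical version) such that every representable presheaf is L-local, and let N ⊆ Psh(C) be a full subcategory containing the representables and such that L(N) is representable for every N ∈ N. Writing i : C → N for the corestricted Yoneda embedding and ℓ : N → C for the restriction of L, the natural transformation β : i^* → ℓ_! of functors Psh(N) → Psh(C), induced by the unit of the adjunction ℓ_! ⊣ ℓ^*, is an L-local equivalence (i.e. L(β) is an equivalence), where i^* is restriction along i and ℓ_! is left Kan extension along ℓ. -/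
/-!
Both `L ∘ i^*` and `L ∘ ℓ_!` preserve colimits, so it suffices to show that `L(β)` is invertible
on a representable `y N`. There `ℓ_!(y N) ≅ y(ℓ N)`, and `β_{y N}` sends `f : i c ⟶ N` to
`e₀⁻¹ ≫ ℓ f : c ⟶ ℓ N`. Since every `i c` is `L`-local, the unit `Δ : N ⟶ L N ≅ y(ℓ N)` is invertible
at `i c`, so `e₀⁻¹` lifts through `Δ` to an isomorphism `θ : y c ≅ i c` natural in `c`. Thus
`β_{y N}` factors as `f ↦ θ ≫ f`, which is an isomorphism `E(i -, N) ≅ N` by full faithfulness and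
Yoneda, followed by `Δ_N`, which `L` inverts.
-/

open CategoryTheory CategoryTheory.Limits

noncomputable section

universe u v

lemma isIso_of_isIso_app_yoneda {E : Type u} [SmallCategory E] {D : Type*} [Category.{u} D]
    [HasColimitsOfSize.{u, u} D] {L₁ L₂ : (Eᵒᵖ ⥤ Type u) ⥤ D}
    [PreservesColimitsOfSize.{u, u} L₁] [PreservesColimitsOfSize.{u, u} L₂]
    (φ : L₁ ⟶ L₂) (h : ∀ N : E, IsIso (φ.app (yoneda.obj N))) : IsIso φ := by
  have : IsIso (Functor.whiskerLeft uliftYoneda.{u} φ) :=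
    (NatTrans.isIso_iff_isIso_app _).2 fun N =>
      (NatTrans.isIso_app_iff_of_iso φ (uliftYonedaIsoYoneda.{u}.app N)).2 (h N)
  have : L₂.IsLeftKanExtension (Functor.whiskerLeft uliftYoneda.{u} φ) :=
    Presheaf.isLeftKanExtension_of_preservesColimits L₂
      (asIso (Functor.whiskerLeft uliftYoneda.{u} φ))
  exact (Functor.isLeftKanExtension_iff_isIso φ (𝟙 (uliftYoneda.{u} ⋙ L₁))
    (Functor.whiskerLeft uliftYoneda.{u} φ) (Category.id_comp _)).mp this

section RestrictedYoneda

variable {C : Type u} [Category.{v} C] {E : Type*} [Category.{v} E] (i : C ⥤ E)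
  {G : E ⥤ (Cᵒᵖ ⥤ Type v)}

def restrictedYonedaHom (θ : yoneda ⟶ i ⋙ G) (N : E) : i.op ⋙ yoneda.obj N ⟶ G.obj N where
  app c := ↾fun f => yonedaEquiv (θ.app c.unop ≫ G.map f)
  naturality c c' v := by
    ext f
    have hθ := θ.naturality v.unop
    dsimp at hθ ⊢
    rw [yonedaEquiv_naturality', reassoc_of% hθ, G.map_comp]

lemma restrictedYonedaHom_comp (θ : yoneda ⟶ i ⋙ G) {G' : E ⥤ (Cᵒᵖ ⥤ Type v)} (α : G ⟶ G')
    (N : E) :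
    restrictedYonedaHom i θ N ≫ α.app N =
      restrictedYonedaHom i (θ ≫ Functor.whiskerLeft i α) N := by
  ext c f
  dsimp [restrictedYonedaHom]
  rw [← yonedaEquiv_comp, Category.assoc, α.naturality, Category.assoc]

lemma isIso_restrictedYonedaHom [G.Full] [G.Faithful] (θ : yoneda ⟶ i ⋙ G) [IsIso θ] (N : E) :
    IsIso (restrictedYonedaHom i θ N) := by
  rw [NatTrans.isIso_iff_isIso_app]
  intro c
  rw [isIso_iff_bijective]
  exact ((Functor.FullyFaithful.ofFullyFaithful G).homEquiv.trans
    ((asIso (θ.app c.unop)).symm.homFromEquiv.trans yonedaEquiv)).bijective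

end RestrictedYoneda

section RestrictionToLan

variable {C E : Type u} [SmallCategory C] [SmallCategory E] (i : C ⥤ E) (ℓ : E ⥤ C)

def restrictionToLan (e₀ : i ⋙ ℓ ≅ 𝟭 C) :
    (Functor.whiskeringLeft Cᵒᵖ Eᵒᵖ (Type u)).obj i.op ⟶ ℓ.op.lan :=
  Functor.whiskerRight (ℓ.op.lanAdjunction (Type u)).unit
      ((Functor.whiskeringLeft _ _ _).obj i.op) ≫
    Functor.whiskerLeft ℓ.op.lan ((Functor.whiskeringLeftObjCompIso i.op ℓ.op).inv ≫
      ((Functor.whiskeringLeft _ _ _).mapIso (NatIso.op e₀)).inv ≫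
      Functor.whiskeringLeftObjIdIso.hom)

def lanObjYonedaIso (N : E) : yoneda.obj (ℓ.obj N) ≅ ℓ.op.lan.obj (yoneda.obj N) :=
  Functor.leftKanExtensionUnique _ (yonedaMap ℓ N) _ (ℓ.op.lanUnit.app (yoneda.obj N))

lemma yonedaMap_comp_lanObjYonedaIso_hom (N : E) :
    yonedaMap ℓ N ≫ Functor.whiskerLeft ℓ.op (lanObjYonedaIso ℓ N).hom =
      (ℓ.op.lanAdjunction (Type u)).unit.app (yoneda.obj N) := by
  rw [Functor.lanAdjunction_unit]
  exact (Functor.descOfIsLeftKanExtension_fac _ _ _ _).trans (Category.id_comp _)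

lemma restrictionToLan_app_yoneda (e₀ : i ⋙ ℓ ≅ 𝟭 C) (N : E) :
    (restrictionToLan i ℓ e₀).app (yoneda.obj N) =
      restrictedYonedaHom i (G := ℓ ⋙ yoneda) (Functor.whiskerRight e₀.inv yoneda) N ≫
        (lanObjYonedaIso ℓ N).hom := by
  rw [restrictionToLan, NatTrans.comp_app, Functor.whiskerRight_app,
    ← yonedaMap_comp_lanObjYonedaIso_hom]
  ext c f
  dsimp [restrictedYonedaHom, yonedaMap, Functor.whiskeringLeftObjIdIso,
    Functor.whiskeringLeftObjCompIso]
  rw [← NatTrans.naturality_apply, ← Functor.map_comp, yonedaEquiv_yoneda_map]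
  rfl

end RestrictionToLan

section Localization

variable {C : Type u} [SmallCategory C] {D : Type*} [Category.{u} D]
  {ι : D ⥤ (Cᵒᵖ ⥤ Type u)} [Reflective ι] {E : Type u} [SmallCategory E]
  {ιN : E ⥤ (Cᵒᵖ ⥤ Type u)} {i : C ⥤ E} {ℓ : E ⥤ C}

variable (ι ιN ℓ) in
def unitToRepresentable (hℓ : ιN ⋙ reflector ι ⋙ ι ≅ ℓ ⋙ yoneda) : ιN ⟶ ℓ ⋙ yoneda :=
  Functor.whiskerLeft ιN (reflectorAdjunction ι).unit ≫ hℓ.hom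

lemma isIso_reflector_map_unitToRepresentable_app (hℓ : ιN ⋙ reflector ι ⋙ ι ≅ ℓ ⋙ yoneda)
    (N : E) : IsIso ((reflector ι).map ((unitToRepresentable ι ιN ℓ hℓ).app N)) := by
  rw [unitToRepresentable, NatTrans.comp_app, Functor.whiskerLeft_app, Functor.map_comp]
  infer_instance

lemma isIso_whiskerLeft_unitToRepresentable
    (hlocal : ∀ c : C, IsIso ((reflectorAdjunction ι).unit.app (yoneda.obj c)))
    (hi : i ⋙ ιN ≅ yoneda) (hℓ : ιN ⋙ reflector ι ⋙ ι ≅ ℓ ⋙ yoneda) :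
    IsIso (Functor.whiskerLeft i (unitToRepresentable ι ιN ℓ hℓ)) := by
  rw [NatTrans.isIso_iff_isIso_app]
  intro c
  have : IsIso ((reflectorAdjunction ι).unit.app (ιN.obj (i.obj c))) :=
    (NatTrans.isIso_app_iff_of_iso _ (hi.app c)).2 (hlocal c)
  rw [Functor.whiskerLeft_app, unitToRepresentable, NatTrans.comp_app, Functor.whiskerLeft_app]
  infer_instance

lemma isIso_reflector_map_restrictionToLan_app_yoneda [ιN.Full] [ιN.Faithful]
    (hlocal : ∀ c : C, IsIso ((reflectorAdjunction ι).unit.app (yoneda.obj c)))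
    (hi : i ⋙ ιN ≅ yoneda) (hℓ : ιN ⋙ reflector ι ⋙ ι ≅ ℓ ⋙ yoneda) (e₀ : i ⋙ ℓ ≅ 𝟭 C)
    (N : E) : IsIso ((reflector ι).map ((restrictionToLan i ℓ e₀).app (yoneda.obj N))) := by
  have := isIso_whiskerLeft_unitToRepresentable hlocal hi hℓ
  have := isIso_reflector_map_unitToRepresentable_app hℓ N
  let θ : yoneda ⟶ i ⋙ ιN := Functor.whiskerRight e₀.inv yoneda ≫
    inv (Functor.whiskerLeft i (unitToRepresentable ι ιN ℓ hℓ))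
  have hθ : θ ≫ Functor.whiskerLeft i (unitToRepresentable ι ιN ℓ hℓ) =
      Functor.whiskerRight e₀.inv yoneda := by
    simp [θ]
  have := isIso_restrictedYonedaHom i θ N
  rw [restrictionToLan_app_yoneda, ← hθ, ← restrictedYonedaHom_comp, Functor.map_comp,
    Functor.map_comp]
  infer_instance

end Localization

/-- A necklace context (1-categorical, set-valued version): a small category `C`, a
reflective localization `L` of `Psh(C)` (presented by a reflective subcategory
`ι : D ⥤ Psh(C)`) such that all representables are `L`-local, and an (essentially
small) full subcategory `ιN : E ⥤ Psh(C)` containing the representables (via the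
corestricted Yoneda embedding `i : C ⥤ E`) such that `L` is representable on `E`
(via `ℓ : E ⥤ C`).  The natural transformation `β : i^* ⟶ ℓ_!`, induced by the unit
of the adjunction `ℓ_! ⊣ ℓ^*`, is an `L`-local equivalence. -/
theorem stmt_3 {C : Type} [SmallCategory C] {D : Type 1} [Category.{0} D]
    (ι : D ⥤ (Cᵒᵖ ⥤ Type)) [Reflective ι]
    -- all representables are L-local
    (hlocal : ∀ c : C, IsIso ((reflectorAdjunction ι).unit.app (yoneda.obj c)))
    -- the full subcategory 𝒩 ⊆ Psh(C)
    {E : Type} [SmallCategory E] (ιN : E ⥤ (Cᵒᵖ ⥤ Type)) [ιN.Full] [ιN.Faithful]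
    -- the corestricted Yoneda embedding i : C ⥤ 𝒩
    (i : C ⥤ E) (hi : i ⋙ ιN ≅ yoneda)
    -- ℓ = L|𝒩 : 𝒩 ⥤ C, i.e. L(N) is representable for N ∈ 𝒩
    (ℓ : E ⥤ C) (hℓ : ιN ⋙ (reflector ι ⋙ ι) ≅ ℓ ⋙ yoneda)
    (e₀ : i ⋙ ℓ ≅ 𝟭 C) :
    ∀ P : Eᵒᵖ ⥤ Type,
      IsIso ((reflector ι).map
        (Functor.whiskerLeft i.op ((ℓ.op.lanAdjunction Type).unit.app P) ≫
          (Functor.isoWhiskerRight (NatIso.op e₀) (ℓ.op.lan.obj P)).inv ≫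
          (Functor.leftUnitor (ℓ.op.lan.obj P)).hom)) := by
  have : HasColimits D := hasColimits_of_reflective ι
  have : PreservesColimits (reflector ι) := (reflectorAdjunction ι).leftAdjoint_preservesColimits
  have : PreservesColimits ℓ.op.lan := (ℓ.op.lanAdjunction Type).leftAdjoint_preservesColimits
  have : IsIso (Functor.whiskerRight (restrictionToLan i ℓ e₀) (reflector ι)) :=
    isIso_of_isIso_app_yoneda _
      (isIso_reflector_map_restrictionToLan_app_yoneda hlocal hi hℓ e₀)
  exact fun P => inferInstanceAs
    (IsIso ((Functor.whiskerRight (restrictionToLan i ℓ e₀) (reflector ι)).app P))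
end
end

section
/- In a necklace context (C, L, N), define Q_N : Psh(C) → Psh(C) as the composite ℓ_! ∘ i_*, where i_* is right Kan extension along the corestricted Yoneda embedding i : C → N and ℓ_! is left Kan extension along ℓ = L|_N : N → C. Then there is a canonical natural transformation λ : Id → Q_N which is an L-local equivalence; consequently, for any presheaf X, the canonical map Q_N(X) → L(X) is an equivalence if and only if Q_N(X) is L-local. -/
open CategoryTheory

noncomputable section

/-! Write `i^*`, `ℓ^*` for restriction along `i`, `ℓ` and `i_*`, `ℓ_!` for the Kan extensions.
For an `L`-local presheaf `Z`, the presheaf `e ↦ Hom(e, Z)` on `𝒩` is both `i_* Z`, because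
`e ≅ i^*(y e)` as presheaves on `C`, and `ℓ^* Z`, because
`Hom(e, Z) ≅ Hom(L e, Z) ≅ Hom(y (ℓ e), Z)`.
So `ℓ^* Z` lies in the essential image of the fully faithful `i_*`, on maps into which `i^*` is
bijective, and `Hom(ℓ_! i_* X, Z) ≅ Hom(i_* X, ℓ^* Z) ≅ Hom(i^* i_* X, i^* ℓ^* Z) ≅ Hom(X, Z)`.
This bijection is precomposition with `λ_X`, so `λ_X` is an `L`-local equivalence, and `κ_X` is
the unit at `Q X` followed by the inverse of `L λ_X`. -/

namespace Necklace

section Abstract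

variable {P Q : Type*} [Category* P] [Category* Q] {F : Q ⥤ P} {R : P ⥤ Q} [R.Full] [R.Faithful]

lemma _root_.CategoryTheory.Adjunction.map_bijective_of_mem_essImage (adj : F ⊣ R) {A Y : Q}
    (hY : R.essImage Y) : Function.Bijective (fun g : A ⟶ Y => F.map g) := by
  have := adj.isIso_unit_app_of_iso hY.getIso.symm
  have hF : (fun g : A ⟶ Y => F.map g) =
      (adj.homEquiv A (F.obj Y)).symm ∘ (asIso (adj.unit.app Y)).homToEquiv := by
    funext g
    simp [Adjunction.homEquiv_counit]
  rw [hF]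
  exact (Equiv.bijective _).comp (Equiv.bijective _)

variable (adj : F ⊣ R) {K : Q ⥤ P} {G : P ⥤ Q} (adj' : K ⊣ G) (γ : G ⋙ F ≅ 𝟭 P)

-- With `F = i^*`, `R = i_*`, `K = ℓ_!` and `G = ℓ^*` this is the paper's `λ`.
def lam : 𝟭 P ⟶ R ⋙ K :=
  inv adj.counit ≫ Functor.whiskerLeft R (Functor.whiskerRight adj'.unit F) ≫
    Functor.whiskerLeft (R ⋙ K) γ.hom

lemma lam_app_comp (X : P) {Z : P} (h : K.obj (R.obj X) ⟶ Z) :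
    (lam adj adj' γ).app X ≫ h =
      inv (adj.counit.app X) ≫ F.map (adj'.homEquiv _ _ h) ≫ γ.hom.app Z := by
  have hγ := γ.hom.naturality h
  simp only [Functor.comp_map, Functor.id_map] at hγ
  simp [lam, Adjunction.homEquiv_unit, hγ]

lemma isLocal_lam_app (X : P) :
    (R.essImage.inverseImage G).isLocal ((lam adj adj' γ).app X) := by
  intro Z hZ
  simp only [lam_app_comp]
  exact ((asIso (adj.counit.app X)).homCongr (γ.app Z)).bijective.comp
    ((adj.map_bijective_of_mem_essImage hZ).comp (adj'.homEquiv _ _).bijective)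

end Abstract

section Reflective

variable {P D : Type*} [Category* P] [Category* D] (ι : D ⥤ P) [Reflective ι]
  {T : P ⥤ P} (lam : 𝟭 P ⟶ T) [∀ X, IsIso ((reflector ι).map (lam.app X))]

def localYonedaIso {Z : P} (hZ : ι.essImage Z) :
    (reflector ι ⋙ ι).op ⋙ yoneda.obj Z ≅ yoneda.obj Z :=
  NatIso.ofComponents (fun Y => (unitCompPartialBijective Y.unop hZ).symm.toIso)
    (by
      intro Y Y' f
      ext g
      simp [unitCompPartialBijective_symm_apply])

@[simps]
def kappa : T ⟶ reflector ι ⋙ ι where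
  app X := (reflectorAdjunction ι).unit.app (T.obj X) ≫ ι.map (inv ((reflector ι).map (lam.app X)))
  naturality X Y f := by
    have hlam : (reflector ι).map (T.map f) ≫ inv ((reflector ι).map (lam.app Y)) =
        inv ((reflector ι).map (lam.app X)) ≫ (reflector ι).map f := by
      rw [IsIso.eq_inv_comp, ← Category.assoc, IsIso.comp_inv_eq, ← Functor.map_comp,
        ← Functor.map_comp]
      exact congrArg _ (lam.naturality f).symm
    have hη := (reflectorAdjunction ι).unit.naturality (T.map f)
    simp only [Functor.id_map, Functor.comp_map] at hη
    simp only [Functor.comp_map, Category.assoc, reassoc_of% hη, ← Functor.map_comp, hlam]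

lemma lam_comp_kappa : lam ≫ kappa ι lam = (reflectorAdjunction ι).unit := by
  ext X
  have hη := (reflectorAdjunction ι).unit.naturality (lam.app X)
  simp only [Functor.id_map, Functor.comp_map] at hη
  simp [reassoc_of% hη]

lemma isIso_reflector_map_kappa_app (X : P) : IsIso ((reflector ι).map ((kappa ι lam).app X)) := by
  rw [kappa_app, Functor.map_comp]
  infer_instance

lemma isIso_kappa_app_iff (X : P) :
    IsIso ((kappa ι lam).app X) ↔ IsIso ((reflectorAdjunction ι).unit.app (T.obj X)) := by
  rw [kappa_app, isIso_comp_right_iff]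

end Reflective

section Presheaf

universe u

variable {C E : Type u} [SmallCategory C] [SmallCategory E]

def restrictYonedaIso (A : E ⥤ Cᵒᵖ ⥤ Type u) [A.Full] [A.Faithful] {i : C ⥤ E}
    (hi : i ⋙ A ≅ yoneda) : yoneda ⋙ (Functor.whiskeringLeft _ _ _).obj i.op ≅ A :=
  NatIso.ofComponents
    (fun e => NatIso.ofComponents
      (fun c => ((Functor.FullyFaithful.ofFullyFaithful A).homEquiv.trans
        ((hi.app c.unop).homFromEquiv.trans yonedaEquiv)).toIso)
      (by
        intro c c' u
        ext f
        show yonedaEquiv (hi.inv.app c'.unop ≫ A.map (i.map u.unop ≫ f)) =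
          (A.obj e).map u (yonedaEquiv (hi.inv.app c.unop ≫ A.map f))
        have hu := hi.inv.naturality u.unop
        simp only [Functor.comp_map] at hu
        rw [Functor.map_comp, ← reassoc_of% hu, yonedaEquiv_naturality']))
    (by
      intro e e' g
      ext c f
      show yonedaEquiv (hi.inv.app c.unop ≫ A.map (f ≫ g)) =
        (A.map g).app c (yonedaEquiv (hi.inv.app c.unop ≫ A.map f))
      rw [Functor.map_comp, ← Category.assoc, yonedaEquiv_comp])

def whiskeringLeftCompIsoId {i : C ⥤ E} {ℓ : E ⥤ C} (e₀ : i ⋙ ℓ ≅ 𝟭 C) :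
    (Functor.whiskeringLeft _ _ (Type u)).obj ℓ.op ⋙ (Functor.whiskeringLeft _ _ _).obj i.op ≅
      𝟭 (Cᵒᵖ ⥤ Type u) :=
  ((Functor.whiskeringLeft _ _ _).mapIso (NatIso.op e₀)).symm

variable (A : E ⥤ Cᵒᵖ ⥤ Type u) [A.Full] [A.Faithful]

def ranObjIso {i : C ⥤ E} (hi : i ⋙ A ≅ yoneda) (X : Cᵒᵖ ⥤ Type u) :
    i.op.ran.obj X ≅ A.op ⋙ yoneda.obj X :=
  (curriedYonedaLemma'.app _).symm ≪≫
    Functor.isoWhiskerLeft yoneda.op ((i.op.ranAdjunction (Type u)).compYonedaIso.app X) ≪≫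
    Functor.isoWhiskerRight (NatIso.op (restrictYonedaIso A hi)).symm (yoneda.obj X)

variable {D : Type (u + 1)} [Category.{u} D] (ι : D ⥤ Cᵒᵖ ⥤ Type u) [Reflective ι]

def restrictedYonedaIsoOfLocal {ℓ : E ⥤ C} (hℓ : A ⋙ reflector ι ⋙ ι ≅ ℓ ⋙ yoneda)
    {Z : Cᵒᵖ ⥤ Type u} (hZ : ι.essImage Z) : A.op ⋙ yoneda.obj Z ≅ ℓ.op ⋙ Z :=
  Functor.isoWhiskerLeft A.op (localYonedaIso ι hZ).symm ≪≫
    Functor.isoWhiskerRight (NatIso.op hℓ).symm (yoneda.obj Z) ≪≫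
    Functor.isoWhiskerLeft ℓ.op (curriedYonedaLemma'.app Z)

lemma mem_essImage_ran_of_local {i : C ⥤ E} (hi : i ⋙ A ≅ yoneda) {ℓ : E ⥤ C}
    (hℓ : A ⋙ reflector ι ⋙ ι ≅ ℓ ⋙ yoneda)
    {Z : Cᵒᵖ ⥤ Type u} (hZ : ι.essImage Z) : i.op.ran.essImage (ℓ.op ⋙ Z) :=
  ⟨Z, ⟨ranObjIso A hi Z ≪≫ restrictedYonedaIsoOfLocal A ι hℓ hZ⟩⟩

end Presheaf

end Necklace

open Necklace

theorem stmt_4_general {C : Type} [SmallCategory C] {D : Type 1} [Category.{0} D]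
    (ι : D ⥤ (Cᵒᵖ ⥤ Type)) [Reflective ι]
    {E : Type} [SmallCategory E] (ιN : E ⥤ (Cᵒᵖ ⥤ Type)) [ιN.Full] [ιN.Faithful]
    (i : C ⥤ E) (hi : i ⋙ ιN ≅ yoneda)
    (ℓ : E ⥤ C) (hℓ : ιN ⋙ (reflector ι ⋙ ι) ≅ ℓ ⋙ yoneda)
    (e₀ : i ⋙ ℓ ≅ 𝟭 C) :
    ∃ (lam : 𝟭 (Cᵒᵖ ⥤ Type) ⟶ (i.op.ran ⋙ ℓ.op.lan))
      (κ : (i.op.ran ⋙ ℓ.op.lan) ⟶ reflector ι ⋙ ι),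
      (∀ X : Cᵒᵖ ⥤ Type, IsIso ((reflector ι).map (lam.app X))) ∧
      lam ≫ κ = (reflectorAdjunction ι).unit ∧
      (∀ X : Cᵒᵖ ⥤ Type, IsIso ((reflector ι).map (κ.app X))) ∧
      (∀ X : Cᵒᵖ ⥤ Type,
        (IsIso (κ.app X) ↔
          IsIso ((reflectorAdjunction ι).unit.app ((i.op.ran ⋙ ℓ.op.lan).obj X)))) := by
  have hi_ff : i.FullyFaithful := (Yoneda.fullyFaithful.ofIso hi.symm).ofCompFaithful
  have := hi_ff.full
  have := hi_ff.faithful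
  have hran_ff := (i.op.ranAdjunction Type).fullyFaithfulROfIsIsoCounit
  have := hran_ff.full
  have := hran_ff.faithful
  let lam := Necklace.lam (i.op.ranAdjunction Type) (ℓ.op.lanAdjunction Type)
    (whiskeringLeftCompIsoId e₀)
  have hlam (X : Cᵒᵖ ⥤ Type) : IsIso ((reflector ι).map (lam.app X)) := by
    rw [← ObjectProperty.isLocal_iff_isIso_map (reflectorAdjunction ι)]
    rintro _ ⟨d, rfl⟩
    exact isLocal_lam_app _ _ _ X _ (mem_essImage_ran_of_local ιN ι hi hℓ (ι.obj_mem_essImage d))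
  exact ⟨lam, kappa ι lam, hlam, lam_comp_kappa ι lam, isIso_reflector_map_kappa_app ι lam,
    isIso_kappa_app_iff ι lam⟩

/-- In a necklace context (1-categorical, set-valued version) `(C, L, 𝒩)`, with
`i : C ⥤ 𝒩` the corestricted Yoneda embedding and `ℓ = L|𝒩 : 𝒩 ⥤ C`, the functor
`Q = ℓ_! ∘ i_* : Psh(C) ⥤ Psh(C)` admits a canonical natural transformation
`λ : Id ⟶ Q` which is an `L`-local equivalence; the induced `L`-local transformation
`κ : Q ⟶ L` (factoring the unit `Id ⟶ L` through `λ`) has the property that for any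
presheaf `X` the map `Q(X) ⟶ L(X)` is an equivalence iff `Q(X)` is `L`-local. -/
theorem stmt_4 {C : Type} [SmallCategory C] {D : Type 1} [Category.{0} D]
    (ι : D ⥤ (Cᵒᵖ ⥤ Type)) [Reflective ι]
    (hlocal : ∀ c : C, IsIso ((reflectorAdjunction ι).unit.app (yoneda.obj c)))
    {E : Type} [SmallCategory E] (ιN : E ⥤ (Cᵒᵖ ⥤ Type)) [ιN.Full] [ιN.Faithful]
    (i : C ⥤ E) (hi : i ⋙ ιN ≅ yoneda)
    (ℓ : E ⥤ C) (hℓ : ιN ⋙ (reflector ι ⋙ ι) ≅ ℓ ⋙ yoneda)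
    (e₀ : i ⋙ ℓ ≅ 𝟭 C) :
    ∃ (lam : 𝟭 (Cᵒᵖ ⥤ Type) ⟶ (i.op.ran ⋙ ℓ.op.lan))
      (κ : (i.op.ran ⋙ ℓ.op.lan) ⟶ reflector ι ⋙ ι),
      (∀ X : Cᵒᵖ ⥤ Type, IsIso ((reflector ι).map (lam.app X))) ∧
      lam ≫ κ = (reflectorAdjunction ι).unit ∧
      (∀ X : Cᵒᵖ ⥤ Type, IsIso ((reflector ι).map (κ.app X))) ∧
      (∀ X : Cᵒᵖ ⥤ Type,
        (IsIso (κ.app X) ↔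
          IsIso ((reflectorAdjunction ι).unit.app ((i.op.ran ⋙ ℓ.op.lan).obj X)))) :=
  stmt_4_general ι ιN i hi ℓ hℓ e₀
end
end

section
/- The full inclusion Nec_thin^op ↪ Nec^op of opposite of thin necklaces into the opposite of all necklaces is 1-final: for every necklace N, the slice category Nec_{thin/N} is connected. Consequently, for any functor F : Nec^op → C into a 1-category C, the colimit of F equals the colimit of its restriction to Nec_thin^op. -/
open CategoryTheory CategoryTheory.Limits Simplicial SSet

noncomputable section

/-- The two-point simplicial set `Δ⁰ ⨿ Δ⁰`. -/
abbrev PtPt : SSet.{0} := Δ[0] ⨿ Δ[0]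

/-- The category of bi-pointed simplicial sets, i.e. simplicial sets equipped with
two chosen vertices, with maps preserving both base points. -/
abbrev BiSSet := Under PtPt

/-- The concatenation `A ∨ B` of two bi-pointed simplicial sets: the pushout of
`A ← Δ⁰ → B` along `a_max` and `b_min`, bi-pointed by `(a_min, b_max)`. -/
def wedge (A B : BiSSet) : BiSSet :=
  Under.mk (coprod.desc
    (coprod.inl ≫ A.hom ≫ pushout.inl (coprod.inr ≫ A.hom) (coprod.inl ≫ B.hom))
    (coprod.inr ≫ B.hom ≫ pushout.inr (coprod.inr ≫ A.hom) (coprod.inl ≫ B.hom)))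

/-- `Δ⁰`, bi-pointed by its unique vertex twice. -/
def unitBi : BiSSet := Under.mk (coprod.desc (𝟙 Δ[0]) (𝟙 Δ[0]))

/-- The standard simplex `Δⁿ` bi-pointed by its initial and terminal vertices. -/
def bead (n : ℕ) : BiSSet :=
  Under.mk (coprod.desc
    (SSet.stdSimplex.map (SimplexCategory.const (SimplexCategory.mk 0) (SimplexCategory.mk n) 0))
    (SSet.stdSimplex.map (SimplexCategory.const (SimplexCategory.mk 0) (SimplexCategory.mk n)
      (Fin.last n))))

/-- The necklace `Δ^{n₁} ∨ ⋯ ∨ Δ^{n_k}` associated to a list of natural numbers. -/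
def neckOf : List ℕ → BiSSet := fun l => match l with
  | [] => unitBi
  | n :: l => wedge (bead n) (neckOf l)

/-- A bi-pointed simplicial set is a necklace if it is isomorphic to a concatenation
of standard simplices (bi-pointed by their extreme vertices). -/
def IsNecklace (A : BiSSet) : Prop := ∃ l : List ℕ, Nonempty (A ≅ neckOf l)

/-- The category of necklaces. -/
abbrev Nec := ObjectProperty.FullSubcategory IsNecklace

/-- A necklace is thin if it is a concatenation of `1`-simplices and at most one
`2`-simplex, i.e. of the form `Δ^{n₁} ∨ ⋯ ∨ Δ^{n_r}` with all `nᵢ ≥ 1` and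
`Σᵢ nᵢ ≤ r + 1`. -/
def IsThin (N : Nec) : Prop :=
  ∃ l : List ℕ, (∀ a ∈ l, 1 ≤ a) ∧ l.sum ≤ l.length + 1 ∧ Nonempty (N.obj ≅ neckOf l)

/-- The full subcategory of thin necklaces. -/
abbrev NecThin := ObjectProperty.FullSubcategory IsThin

/-- The inclusion of thin necklaces into necklaces. -/
abbrev thinInclusion : NecThin ⥤ Nec := ObjectProperty.ι IsThin


/-!
A necklace with bead sizes `l` is modelled concretely: its `k`-simplices are the monotone
sequences of `k + 1` natural numbers lying in one bead, and every map of necklaces is induced by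
a monotone vertex map sending beads into beads. Fix a necklace `N` with pattern `L`. Every object
`T → N` of `Nec_{thin/N}` receives a map from the spine of `T`, so it suffices to connect the
very thin objects, i.e. sequences `0 = v₀ ≤ ⋯ ≤ v_k = |L|` whose consecutive terms share a bead of
`L`, to the spine of `N` itself. A repeated vertex is removed along a codegeneracy of spines. A gap
`v_a + 2 ≤ v_{a+1}` is halved by the thin necklace in which the `a`-th edge becomes a `2`-simplex:
it receives maps both from the old spine and from the spine with `v_a + 1` inserted. Once no
repetitions and no gaps are left, the object is the identity of the spine of `N`.
-/

open Opposite

namespace Necklace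

/-- Laying beads of the sizes listed in `l` end to end on `ℕ`, starting at `c`, the vertices
`x` and `y` lie in one common bead. -/
def InBead (l : List ℕ) (c x y : ℕ) : Prop :=
  match l with
  | [] => c ≤ x ∧ y ≤ c
  | n :: l => (c ≤ x ∧ y ≤ c + n) ∨ InBead l (c + n) x y

def spine (k : ℕ) : List ℕ := List.replicate k 1

@[simp] lemma spine_sum (k : ℕ) : (spine k).sum = k := by simp [spine]

lemma spine_succ (k : ℕ) : spine (k + 1) = 1 :: spine k := rfl

namespace InBead

variable {l : List ℕ} {c x y : ℕ}

lemma le_left (h : InBead l c x y) : c ≤ x := by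
  induction l generalizing c with
  | nil => exact h.1
  | cons n l ih => exact h.elim (·.1) fun h => (ih h).trans' (Nat.le_add_right c n)

lemma le_sum (h : InBead l c x y) : y ≤ c + l.sum := by
  induction l generalizing c with
  | nil => simpa using h.2
  | cons n l ih =>
    simp only [List.sum_cons]
    rcases h with h | h
    · omega
    · have := ih h; omega

lemma mono {x' y' : ℕ} (h : InBead l c x y) (hx : x ≤ x') (hy : y' ≤ y) :
    InBead l c x' y' := by
  induction l generalizing c with
  | nil => exact ⟨h.1.trans hx, hy.trans h.2⟩
  | cons n l ih => exact h.imp (fun h => ⟨h.1.trans hx, hy.trans h.2⟩) ih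

lemma of_le (hx : c ≤ x) (hy : y ≤ c) : InBead l c x y := by
  cases l with
  | nil => exact ⟨hx, hy⟩
  | cons n l => exact Or.inl ⟨hx, hy.trans (Nat.le_add_right c n)⟩

lemma of_le_succ (hx : c ≤ x) (hxy : y ≤ x + 1) (hy : y ≤ c + l.sum) : InBead l c x y := by
  induction l generalizing c with
  | nil => exact ⟨hx, by simpa using hy⟩
  | cons n l ih =>
    by_cases h : y ≤ c + n
    · exact Or.inl ⟨hx, h⟩
    · simp only [List.sum_cons] at hy
      exact Or.inr (ih (by omega) (by omega))

lemma self (h : x ≤ l.sum) : InBead l 0 x x :=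
  of_le_succ (Nat.zero_le x) (Nat.le_succ x) (by omega)

lemma add_iff (d : ℕ) : InBead l (d + c) (d + x) (d + y) ↔ InBead l c x y := by
  induction l generalizing c with
  | nil => simp only [InBead]; omega
  | cons n l ih => simp only [InBead, Nat.add_assoc, ih, Nat.add_le_add_iff_left]

lemma cons_add {n : ℕ} (h : InBead l 0 x y) : InBead (n :: l) 0 (n + x) (n + y) :=
  Or.inr (by rw [Nat.zero_add]; exact (add_iff n).2 h)

lemma of_cons {n : ℕ} (h : InBead (n :: l) 0 x y) (hy : n < y) :
    n ≤ x ∧ InBead l 0 (x - n) (y - n) := by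
  have h' : InBead l (n + 0) x y := by simpa using h.resolve_left (by omega)
  have hx : n ≤ x := h'.le_left
  refine ⟨hx, (add_iff n).1 ?_⟩
  rwa [Nat.add_sub_cancel' hx, Nat.add_sub_cancel' (by omega)]

lemma append_iff {l₁ l₂ : List ℕ} :
    InBead (l₁ ++ l₂) c x y ↔ InBead l₁ c x y ∨ InBead l₂ (c + l₁.sum) x y := by
  induction l₁ generalizing c with
  | nil => exact ⟨Or.inr, fun h => h.elim (fun h => of_le h.1 (by simpa using h.2)) (by simp)⟩
  | cons n l ih => simp only [List.cons_append, InBead, ih, List.sum_cons, Nat.add_assoc, or_assoc]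

lemma spine_iff {k : ℕ} : InBead (spine k) c x y ↔ c ≤ x ∧ y ≤ x + 1 ∧ y ≤ c + k := by
  induction k generalizing c with
  | zero => simp only [spine, List.replicate_zero, InBead]; omega
  | succ k ih => simp only [spine_succ, InBead, ih]; omega

end InBead

/-- The necklace with bead sizes `l`: its `k`-simplices are the monotone sequences of `k + 1`
vertices in `ℕ` that lie in one bead. -/
def model (l : List ℕ) : SSet.{0} where
  obj k := {f : Fin (k.unop.len + 1) →o ℕ // InBead l 0 (f 0) (f (Fin.last _))}
  map α := TypeCat.ofHom fun f => ⟨f.1.comp α.unop.toOrderHom,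
    f.2.mono (f.1.monotone (Fin.zero_le _)) (f.1.monotone (Fin.le_last _))⟩
  map_id _ := rfl
  map_comp _ _ := rfl

namespace model

variable {l : List ℕ}

lemma le_sum {k : SimplexCategoryᵒᵖ} (f : (model l).obj k) (i : Fin (k.unop.len + 1)) :
    f.1 i ≤ l.sum :=
  (f.1.monotone (Fin.le_last i)).trans (by simpa using f.2.le_sum)

lemma hom_ext {X : SSet.{0}} {g g' : X ⟶ model l}
    (h : ∀ k x i, ((g.app k x).1 i : ℕ) = (g'.app k x).1 i) : g = g' := by
  ext k x
  exact Subtype.ext (OrderHom.ext _ _ (funext (h k x)))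

def vertex (l : List ℕ) (x : ℕ) (hx : x ≤ l.sum) : Δ[0] ⟶ model l where
  app _ := TypeCat.ofHom fun _ => ⟨OrderHom.const _ x, InBead.self hx⟩

def edge (l : List ℕ) {x y : ℕ} (hxy : x ≤ y) (h : InBead l 0 x y) : (model l).obj (op ⦋1⦌) :=
  ⟨⟨![x, y], by simpa [Fin.monotone_iff_le_succ] using hxy⟩, h⟩

end model

def biHomMk {X Y : SSet.{0}} {a b : Δ[0] ⟶ X} {a' b' : Δ[0] ⟶ Y} (g : X ⟶ Y)
    (ha : a ≫ g = a') (hb : b ≫ g = b') :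
    Under.mk (coprod.desc a b : PtPt ⟶ X) ⟶ Under.mk (coprod.desc a' b' : PtPt ⟶ Y) :=
  Under.homMk g (by
    apply coprod.hom_ext
    · simp only [Under.mk_hom]; rw [coprod.inl_desc_assoc, coprod.inl_desc, ha]
    · simp only [Under.mk_hom]; rw [coprod.inr_desc_assoc, coprod.inr_desc, hb])

def biIsoMk {X Y : SSet.{0}} {a b : Δ[0] ⟶ X} {a' b' : Δ[0] ⟶ Y} (e : X ≅ Y)
    (ha : a ≫ e.hom = a') (hb : b ≫ e.hom = b') :
    Under.mk (coprod.desc a b : PtPt ⟶ X) ≅ Under.mk (coprod.desc a' b' : PtPt ⟶ Y) :=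
  Under.isoMk e (biHomMk e.hom ha hb).w

lemma inl_hom_comp_right {A B : BiSSet} (G : A ⟶ B) :
    (coprod.inl ≫ A.hom) ≫ G.right = coprod.inl ≫ B.hom :=
  (Category.assoc _ _ _).trans (congrArg (_ ≫ ·) (Under.w G))

lemma inr_hom_comp_right {A B : BiSSet} (G : A ⟶ B) :
    (coprod.inr ≫ A.hom) ≫ G.right = coprod.inr ≫ B.hom :=
  (Category.assoc _ _ _).trans (congrArg (_ ≫ ·) (Under.w G))

def biModel (l : List ℕ) : BiSSet :=
  Under.mk (coprod.desc (model.vertex l 0 (Nat.zero_le _)) (model.vertex l l.sum le_rfl))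

section Maps

variable {l L M : List ℕ}

lemma biModel_inl : coprod.inl ≫ (biModel l).hom = model.vertex l 0 (Nat.zero_le _) :=
  coprod.inl_desc _ _

lemma biModel_inr : coprod.inr ≫ (biModel l).hom = model.vertex l l.sum le_rfl :=
  coprod.inr_desc _ _

/-- Only the values of `v` on `0, …, l.sum` matter. -/
structure Admissible (l L : List ℕ) (v : ℕ →o ℕ) : Prop where
  inBead : ∀ x y, x ≤ y → InBead l 0 x y → InBead L 0 (v x) (v y)
  map_zero : v 0 = 0
  map_sum : v l.sum = L.sum

lemma Admissible.comp {w v : ℕ →o ℕ} (hv : Admissible L M v) (hw : Admissible l L w) :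
    Admissible l M (v.comp w) where
  inBead x y hxy h := hv.inBead _ _ (w.monotone hxy) (hw.inBead x y hxy h)
  map_zero := by simp [hw.map_zero, hv.map_zero]
  map_sum := by simp [hw.map_sum, hv.map_sum]

def modelMap (v : ℕ →o ℕ) (hv : ∀ x y, x ≤ y → InBead l 0 x y → InBead L 0 (v x) (v y)) :
    model l ⟶ model L where
  app _ := TypeCat.ofHom fun f => ⟨v.comp f.1, hv _ _ (f.1.monotone (Fin.zero_le _)) f.2⟩

lemma vertex_comp_modelMap (v : ℕ →o ℕ) (hv) (x : ℕ) (hx : x ≤ l.sum) :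
    model.vertex l x hx ≫ modelMap v hv =
      model.vertex L (v x) (by simpa using (hv x x le_rfl (InBead.self hx)).le_sum) :=
  rfl

def biModelMap (v : ℕ →o ℕ) (hv : Admissible l L v) : biModel l ⟶ biModel L :=
  biHomMk (modelMap v hv.inBead) (by rw [vertex_comp_modelMap]; simp only [hv.map_zero])
    (by rw [vertex_comp_modelMap]; simp only [hv.map_sum])

lemma biModelMap_comp {v w : ℕ →o ℕ} (hv : Admissible l L v) (hw : Admissible L M w) :
    biModelMap v hv ≫ biModelMap w hw = biModelMap (w.comp v) (hw.comp hv) := by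
  ext : 1
  exact model.hom_ext fun _ _ _ => rfl

lemma biModelMap_congr {v w : ℕ →o ℕ} (hv : Admissible l L v) (hw : Admissible l L w)
    (h : ∀ x ≤ l.sum, v x = w x) : biModelMap v hv = biModelMap w hw := by
  ext : 1
  exact model.hom_ext fun _ f i => h _ (model.le_sum f i)

end Maps

section Fullness

variable {l L : List ℕ} (g : model l ⟶ model L)

/-- The value of `g` on the vertex `x`, continued by translation beyond `l.sum`. -/
def vertexFun (x : ℕ) : ℕ :=
  (g.app (op ⦋0⦌) ⟨OrderHom.const _ (min x l.sum), InBead.self (min_le_right _ _)⟩).1 0 +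
    (x - l.sum)

lemma app_coe_eq_vertexFun {k : SimplexCategoryᵒᵖ} (f : (model l).obj k)
    (i : Fin (k.unop.len + 1)) : (g.app k f).1 i = vertexFun g (f.1 i) := by
  have h := (NatTrans.naturality_apply g (SimplexCategory.const ⦋0⦌ k.unop i).op f).symm
  simp only [vertexFun, min_eq_left (model.le_sum f i), Nat.sub_eq_zero_of_le (model.le_sum f i)]
  exact congr_arg (fun s : (model L).obj (op ⦋0⦌) => s.1 0) h

lemma vertexFun_le_and_inBead {x y : ℕ} (hxy : x ≤ y) (h : InBead l 0 x y) :
    vertexFun g x ≤ vertexFun g y ∧ InBead L 0 (vertexFun g x) (vertexFun g y) := by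
  have h₀ := app_coe_eq_vertexFun g (model.edge l hxy h) 0
  have h₁ := app_coe_eq_vertexFun g (model.edge l hxy h) 1
  exact ⟨h₀ ▸ h₁ ▸ (g.app _ (model.edge l hxy h)).1.monotone (Fin.zero_le 1),
    h₀ ▸ h₁ ▸ (g.app _ (model.edge l hxy h)).2⟩

def vertexMap : ℕ →o ℕ :=
  ⟨vertexFun g, monotone_nat_of_le_succ fun x => by
    by_cases hx : x + 1 ≤ l.sum
    · exact (vertexFun_le_and_inBead g (Nat.le_succ x)
        (InBead.of_le_succ (Nat.zero_le x) le_rfl (by omega))).1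
    · simp only [vertexFun, min_eq_right (by omega : l.sum ≤ x),
        min_eq_right (by omega : l.sum ≤ x + 1)]
      omega⟩

lemma vertexFun_eq_of_vertex_comp {x y : ℕ} {hx : x ≤ l.sum} {hy : y ≤ L.sum}
    (h : model.vertex l x hx ≫ g = model.vertex L y hy) : vertexFun g x = y := by
  have := congr_arg (fun s : (model L).obj (op ⦋0⦌) => s.1 0)
    (ConcreteCategory.congr_hom (NatTrans.congr_app h (op ⦋0⦌)) (stdSimplex.const 0 0 _))
  exact (app_coe_eq_vertexFun g _ 0).symm.trans this

lemma exists_biModelMap_eq (G : biModel l ⟶ biModel L) :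
    ∃ (v : ℕ →o ℕ) (hv : Admissible l L v), G = biModelMap v hv := by
  have hv : Admissible l L (vertexMap G.right) :=
    { inBead := fun _ _ hxy h => (vertexFun_le_and_inBead G.right hxy h).2
      map_zero := vertexFun_eq_of_vertex_comp G.right <| by
        rw [← biModel_inl, ← biModel_inl]; exact inl_hom_comp_right G
      map_sum := vertexFun_eq_of_vertex_comp G.right <| by
        rw [← biModel_inr, ← biModel_inr]; exact inr_hom_comp_right G }
  refine ⟨_, hv, ?_⟩
  ext : 1
  exact model.hom_ext fun _ f i => app_coe_eq_vertexFun G.right f i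

end Fullness

section Wedge

variable (n : ℕ) (l : List ℕ)

def beadIncl : Δ[n] ⟶ model (n :: l) where
  app _ := TypeCat.ofHom fun σ =>
    ⟨⟨fun i => (stdSimplex.objEquiv σ).toOrderHom i,
      fun _ _ hij => (stdSimplex.objEquiv σ).toOrderHom.monotone hij⟩,
      Or.inl ⟨Nat.zero_le _, (Fin.is_le _).trans (Nat.le_add_left n 0)⟩⟩

def shiftIncl : model l ⟶ model (n :: l) :=
  modelMap ⟨(n + ·), fun _ _ h => Nat.add_le_add_left h n⟩ fun _ _ _ => InBead.cons_add

lemma beadIncl_app_injective (k : SimplexCategoryᵒᵖ) : Function.Injective ((beadIncl n l).app k) :=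
  fun _ _ h => stdSimplex.objEquiv.injective <| SimplexCategory.Hom.ext _ _ <| OrderHom.ext _ _ <|
    funext fun i => Fin.ext (congr_arg (fun f : (model (n :: l)).obj k => f.1 i) h)

lemma shiftIncl_app_injective (k : SimplexCategoryᵒᵖ) :
    Function.Injective ((shiftIncl n l).app k) :=
  fun _ _ h => Subtype.ext <| OrderHom.ext _ _ <| funext fun i =>
    Nat.add_left_cancel (congr_arg (fun f : (model (n :: l)).obj k => f.1 i) h)

lemma first_comp_beadIncl :
    SSet.stdSimplex.map (SimplexCategory.const ⦋0⦌ ⦋n⦌ 0) ≫ beadIncl n l =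
      model.vertex (n :: l) 0 (Nat.zero_le _) :=
  model.hom_ext fun _ _ _ => rfl

lemma last_comp_beadIncl :
    SSet.stdSimplex.map (SimplexCategory.const ⦋0⦌ ⦋n⦌ (Fin.last n)) ≫ beadIncl n l =
      model.vertex l 0 (Nat.zero_le _) ≫ shiftIncl n l :=
  model.hom_ext fun _ _ _ => rfl

lemma last_comp_shiftIncl :
    model.vertex l l.sum le_rfl ≫ shiftIncl n l = model.vertex (n :: l) (n :: l).sum le_rfl :=
  model.hom_ext fun _ _ _ => rfl

variable {n l}

lemma exists_beadIncl_or_shiftIncl {k : SimplexCategoryᵒᵖ} (f : (model (n :: l)).obj k) :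
    (∃ σ, (beadIncl n l).app k σ = f) ∨ ∃ g, (shiftIncl n l).app k g = f := by
  by_cases hf : f.1 (Fin.last _) ≤ n
  · refine Or.inl ⟨stdSimplex.objMk ⟨fun i => ⟨f.1 i, ?_⟩, fun _ _ h => f.1.monotone h⟩, rfl⟩
    exact Nat.lt_succ_of_le ((f.1.monotone (Fin.le_last i)).trans hf)
  · obtain ⟨h0, hf'⟩ := f.2.of_cons (not_le.1 hf)
    refine Or.inr ⟨⟨⟨fun i => f.1 i - n, fun _ _ h => Nat.sub_le_sub_right (f.1.monotone h) n⟩,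
      hf'⟩, Subtype.ext <| OrderHom.ext _ _ <| funext fun i => ?_⟩
    have := f.1.monotone (Fin.zero_le i)
    exact Nat.add_sub_cancel' (by omega)

lemma eq_vertex_of_beadIncl_eq_shiftIncl {k : SimplexCategoryᵒᵖ} {σ : Δ[n].obj k}
    {g : (model l).obj k} (h : (beadIncl n l).app k σ = (shiftIncl n l).app k g)
    (pt : Δ[0].obj k) : g = (model.vertex l 0 (Nat.zero_le _)).app k pt := by
  refine Subtype.ext <| OrderHom.ext _ _ <| funext fun i => ?_
  have h₁ : ((stdSimplex.objEquiv σ).toOrderHom i : ℕ) = n + g.1 i :=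
    congr_arg (fun f : (model (n :: l)).obj k => f.1 i) h
  have h₂ : ((stdSimplex.objEquiv σ).toOrderHom i : ℕ) ≤ n := Fin.is_le _
  show g.1 i = 0
  omega

variable (n l)

/-- Degreewise, `model (n :: l)` is the union of the bead and the shifted copy of `model l`,
which are disjoint except for the vertex `n`. -/
lemma isPushout_model_cons :
    IsPushout (SSet.stdSimplex.map (SimplexCategory.const ⦋0⦌ ⦋n⦌ (Fin.last n)))
      (model.vertex l 0 (Nat.zero_le _)) (beadIncl n l) (shiftIncl n l) := by
  refine IsPushout.of_forall_isPushout_app fun k => ?_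
  have : Mono ((beadIncl n l).app k) := (mono_iff_injective _).2 (beadIncl_app_injective n l k)
  have : Subsingleton (Δ[0].obj k) :=
    ⟨fun _ _ => stdSimplex.objEquiv.injective (SimplexCategory.isTerminalZero.hom_ext _ _)⟩
  have hw := NatTrans.congr_app (last_comp_beadIncl n l) k
  refine Types.isPushout_of_isPullback_of_mono' ?_
    (Set.eq_univ_of_forall exists_beadIncl_or_shiftIncl)
    fun _ _ _ _ h => shiftIncl_app_injective n l k h
  refine (Types.isPullback_iff _ _ _ _).2 ⟨hw, fun _ _ _ => Subsingleton.elim _ _, fun σ g h => ?_⟩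
  refine ⟨stdSimplex.const 0 0 k, ?_, (eq_vertex_of_beadIncl_eq_shiftIncl h _).symm⟩
  refine beadIncl_app_injective n l k ((ConcreteCategory.congr_hom hw _).trans ?_)
  exact (congr_arg ((shiftIncl n l).app k) (eq_vertex_of_beadIncl_eq_shiftIncl h _)).symm.trans
    h.symm

variable {l} (e : neckOf l ≅ biModel l)

lemma isPushout_wedge :
    IsPushout (coprod.inr ≫ (bead n).hom) (coprod.inl ≫ (neckOf l).hom) (beadIncl n l)
      (e.hom.right ≫ shiftIncl n l) := by
  refine (isPushout_model_cons n l).of_iso' (Iso.refl _) (Iso.refl _) ((Under.forget _).mapIso e)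
    (Iso.refl _) ?_ ?_ ?_ ?_
  · exact (Category.id_comp _).trans (coprod.inr_desc _ _).symm
  · exact (Category.id_comp _).trans ((inl_hom_comp_right e.hom).trans biModel_inl).symm
  · exact (Category.id_comp _).trans (Category.comp_id _).symm
  · exact (Category.comp_id _).symm

def wedgeIso : neckOf (n :: l) ≅ biModel (n :: l) :=
  biIsoMk (isPushout_wedge n e).isoPushout.symm
    (by
      rw [Iso.symm_hom, Category.assoc, Category.assoc, (isPushout_wedge n e).inl_isoPushout_inv]
      exact (Category.assoc _ _ _).symm.trans
        ((congrArg (· ≫ beadIncl n l) (coprod.inl_desc _ _)).trans (first_comp_beadIncl n l)))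
    (by
      rw [Iso.symm_hom, Category.assoc, Category.assoc, (isPushout_wedge n e).inr_isoPushout_inv]
      exact (Category.assoc _ _ _).symm.trans ((congrArg (· ≫ shiftIncl n l)
        ((Category.assoc _ _ _).symm.trans ((inr_hom_comp_right e.hom).trans biModel_inr))).trans
        (last_comp_shiftIncl n l)))

end Wedge

def unitBiIso : unitBi ≅ biModel [] :=
  biIsoMk
    { hom := model.vertex [] 0 le_rfl
      inv := stdSimplex.isTerminalObj₀.from _
      hom_inv_id := stdSimplex.isTerminalObj₀.hom_ext _ _
      inv_hom_id := model.hom_ext fun _ f i => (Nat.le_zero.1 (model.le_sum f i)).symm }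
    (Category.id_comp _) (Category.id_comp _)

def neckOfIso (l : List ℕ) : neckOf l ≅ biModel l :=
  match l with
  | [] => unitBiIso
  | n :: l => wedgeIso n (neckOfIso l)

def IsThinPattern (l : List ℕ) : Prop := (∀ a ∈ l, 1 ≤ a) ∧ l.sum ≤ l.length + 1

lemma isThinPattern_spine (k : ℕ) : IsThinPattern (spine k) :=
  ⟨fun a ha => (List.eq_of_mem_replicate ha).ge, by simp [spine]⟩

def triangleSpine (a b : ℕ) : List ℕ := spine a ++ 2 :: spine b

@[simp] lemma triangleSpine_sum (a b : ℕ) : (triangleSpine a b).sum = a + b + 2 := by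
  simp only [triangleSpine, List.sum_append, List.sum_cons, spine_sum]; omega

lemma isThinPattern_triangleSpine (a b : ℕ) : IsThinPattern (triangleSpine a b) := by
  refine ⟨fun c hc => ?_, by simp [triangleSpine, spine]; omega⟩
  simp only [triangleSpine, spine, List.mem_append, List.mem_cons, List.mem_replicate] at hc
  omega

lemma InBead.triangleSpine_iff {a b x y : ℕ} :
    InBead (triangleSpine a b) 0 x y ↔ (y ≤ x + 1 ∧ y ≤ a + b + 2) ∨ (a ≤ x ∧ y ≤ a + 2) := by
  simp only [triangleSpine, InBead.append_iff, InBead, InBead.spine_iff, spine_sum]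
  omega

lemma admissible_spine_iff {k : ℕ} {L : List ℕ} {v : ℕ →o ℕ} :
    Admissible (spine k) L v ↔
      v 0 = 0 ∧ v k = L.sum ∧ ∀ i < k, InBead L 0 (v i) (v (i + 1)) := by
  refine ⟨fun hv => ⟨hv.map_zero, by simpa using hv.map_sum, fun i hi => hv.inBead _ _
    (Nat.le_succ i) (InBead.spine_iff.2 ⟨Nat.zero_le _, le_rfl, by omega⟩)⟩,
    fun ⟨h₀, hk, hstep⟩ => ⟨fun x y hxy h => ?_, h₀, by simpa using hk⟩⟩
  obtain ⟨-, hyx, hyk⟩ := InBead.spine_iff.1 h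
  rcases Nat.eq_or_lt_of_le hxy with rfl | hxy
  · exact InBead.self (hk ▸ v.monotone (by omega))
  · obtain rfl : y = x + 1 := by omega
    exact hstep x (by omega)

lemma admissible_id_spine {k : ℕ} {l : List ℕ} (hk : k = l.sum) :
    Admissible (spine k) l OrderHom.id :=
  admissible_spine_iff.2 ⟨rfl, hk, fun i hi =>
    InBead.of_le_succ (Nat.zero_le i) le_rfl (by simp only [OrderHom.id_coe, id]; omega)⟩

/-- The coface `δ_p`, extended to `ℕ`. -/
def skipAt (p : ℕ) : ℕ →o ℕ :=
  ⟨fun t => if t < p then t else t + 1, monotone_nat_of_le_succ fun t => by split_ifs <;> omega⟩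

/-- The codegeneracy `σ_p`, extended to `ℕ`. -/
def collapseAt (p : ℕ) : ℕ →o ℕ :=
  ⟨fun t => if t ≤ p then t else t - 1, monotone_nat_of_le_succ fun t => by split_ifs <;> omega⟩

def insertValue (v : ℕ →o ℕ) (a m : ℕ) (h₁ : v a ≤ m) (h₂ : m ≤ v (a + 1)) : ℕ →o ℕ :=
  ⟨fun t => if t ≤ a then v t else if t = a + 1 then m else v (t - 1),
    monotone_nat_of_le_succ fun t => by
      split_ifs <;> first
        | omega
        | exact v.monotone (by omega)
        | (obtain rfl : t = a := by omega); exact h₁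
        | (obtain rfl : t = a + 1 := by omega); simpa using h₂⟩

lemma apply_skipAt_collapseAt {v : ℕ →o ℕ} {a : ℕ} (hdeg : v (a + 1) = v a) (x : ℕ) :
    v (skipAt (a + 1) (collapseAt a x)) = v x := by
  simp only [skipAt, collapseAt, OrderHom.coe_mk]
  split_ifs <;> first
    | rfl
    | omega
    | (congr 1; omega)
    | (obtain rfl : x = a + 1 := by omega); exact hdeg.symm

section insertValue

variable {v : ℕ →o ℕ} {a m : ℕ} {h₁ : v a ≤ m} {h₂ : m ≤ v (a + 1)}

lemma insertValue_of_le {t : ℕ} (ht : t ≤ a) : insertValue v a m h₁ h₂ t = v t := if_pos ht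

lemma insertValue_succ : insertValue v a m h₁ h₂ (a + 1) = m := by
  simp [insertValue]

lemma insertValue_of_lt {t : ℕ} (ht : a + 1 < t) : insertValue v a m h₁ h₂ t = v (t - 1) := by
  simp only [insertValue, OrderHom.coe_mk]
  rw [if_neg (by omega), if_neg (by omega)]

end insertValue

lemma insertValue_skipAt (v : ℕ →o ℕ) (a m : ℕ) (h₁ h₂) (x : ℕ) :
    insertValue v a m h₁ h₂ (skipAt (a + 1) x) = v x := by
  by_cases hx : x < a + 1
  · rw [show skipAt (a + 1) x = x from if_pos hx, insertValue_of_le (by omega)]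
  · rw [show skipAt (a + 1) x = x + 1 from if_neg hx, insertValue_of_lt (by omega),
      Nat.add_sub_cancel]

lemma le_apply_of_lt_succ {k : ℕ} {v : ℕ → ℕ}
    (hst : ∀ i < k, v i < v (i + 1)) (i : ℕ) (hi : i ≤ k) : i ≤ v i := by
  induction i with
  | zero => exact Nat.zero_le _
  | succ i ih => exact (ih (by omega)).trans_lt (hst i (by omega))

lemma apply_eq_self_of_unit_steps {k : ℕ} {v : ℕ → ℕ} (h₀ : v 0 = 0)
    (hstep : ∀ i < k, v (i + 1) = v i + 1) (i : ℕ) (hi : i ≤ k) : v i = i := by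
  induction i with
  | zero => exact h₀
  | succ i ih => rw [hstep i (by omega), ih (by omega)]

lemma insertValue_lt_succ {k a : ℕ} {v : ℕ →o ℕ} (hst : ∀ i < k, v i < v (i + 1)) (ha : a < k)
    (hgap : v a + 2 ≤ v (a + 1)) (i : ℕ) (hi : i < k + 1) :
    insertValue v a (v a + 1) (by omega) (by omega) i <
      insertValue v a (v a + 1) (by omega) (by omega) (i + 1) := by
  rcases lt_trichotomy i a with h | rfl | h
  · rw [insertValue_of_le h.le, insertValue_of_le h]
    exact hst i (by omega)
  · rw [insertValue_of_le le_rfl, insertValue_succ]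
    omega
  rcases (Nat.succ_le_of_lt h).eq_or_lt with rfl | h
  · rw [insertValue_succ, insertValue_of_lt (by omega)]
    exact hgap
  · rw [insertValue_of_lt h, insertValue_of_lt (by omega)]
    simpa [Nat.sub_add_cancel (by omega : 1 ≤ i)] using hst (i - 1) (by omega)

section Moves

variable {L : List ℕ}

lemma admissible_skipAt_triangleSpine (a b : ℕ) :
    Admissible (spine (a + b + 1)) (triangleSpine a b) (skipAt (a + 1)) := by
  refine admissible_spine_iff.2 ⟨by simp [skipAt], by simp [skipAt], fun i hi => ?_⟩
  rw [InBead.triangleSpine_iff]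
  simp only [skipAt, OrderHom.coe_mk]
  split_ifs <;> omega

lemma admissible_collapseAt {a k : ℕ} (ha : a ≤ k) :
    Admissible (spine (k + 1)) (spine k) (collapseAt a) := by
  refine admissible_spine_iff.2 ⟨by simp [collapseAt], by simp [collapseAt]; omega, fun i hi => ?_⟩
  rw [InBead.spine_iff]
  simp only [collapseAt, OrderHom.coe_mk]
  split_ifs <;> omega

lemma Admissible.comp_skipAt {a k : ℕ} {v : ℕ →o ℕ} (hv : Admissible (spine (k + 1)) L v)
    (ha : a ≤ k) (hdeg : v (a + 1) = v a) : Admissible (spine k) L (v.comp (skipAt (a + 1))) := by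
  obtain ⟨h₀, hk, hstep⟩ := admissible_spine_iff.1 hv
  refine admissible_spine_iff.2 ⟨?_, ?_, fun i hi => ?_⟩ <;>
    simp only [OrderHom.comp_coe, Function.comp_apply, skipAt, OrderHom.coe_mk]
  · simpa using h₀
  · split_ifs with h
    · obtain rfl : a = k := by omega
      rw [← hk, hdeg]
    · exact hk
  · split_ifs
    · exact hstep i (by omega)
    · obtain rfl : a = i := by omega
      simpa [hdeg] using hstep (a + 1) (by omega)
    · omega
    · exact hstep (i + 1) (by omega)

lemma Admissible.insertValue_triangleSpine {a b : ℕ} {v : ℕ →o ℕ}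
    (hv : Admissible (spine (a + b + 1)) L v) (hgap : v a + 2 ≤ v (a + 1)) :
    Admissible (triangleSpine a b) L (insertValue v a (v a + 1) (by omega) (by omega)) := by
  set w := insertValue v a (v a + 1) (by omega) (by omega)
  have hunit {x y : ℕ} (hxy : x ≤ y) (hyx : y ≤ x + 1) (hy : y ≤ a + b + 1) :
      InBead L 0 (v x) (v y) :=
    hv.inBead x y hxy (InBead.spine_iff.2 ⟨Nat.zero_le _, hyx, by omega⟩)
  refine ⟨fun x y hxy h => ?_, (insertValue_of_le (Nat.zero_le a)).trans hv.map_zero, ?_⟩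
  · have htri (hx : a ≤ x) (hy : y ≤ a + 2) : InBead L 0 (w x) (w y) :=
      (hunit (Nat.le_succ a) le_rfl (by omega)).mono
        ((insertValue_of_le le_rfl).symm.le.trans (w.monotone hx))
        ((w.monotone hy).trans (insertValue_of_lt (by omega)).le)
    rcases InBead.triangleSpine_iff.1 h with ⟨hyx, hy⟩ | ⟨hx, hy⟩
    · by_cases hya : y ≤ a
      · rw [insertValue_of_le (hxy.trans hya), insertValue_of_le hya]
        exact hunit hxy hyx (by omega)
      · by_cases hxa : a + 2 ≤ x
        · rw [insertValue_of_lt (by omega), insertValue_of_lt (by omega)]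
          exact hunit (by omega) (by omega) (by omega)
        · exact htri (by omega) (by omega)
    · exact htri hx hy
  · rw [triangleSpine_sum, insertValue_of_lt (by omega)]
    exact (congrArg v (by simp)).trans hv.map_sum

lemma Admissible.insertValue_spine {a b : ℕ} {v : ℕ →o ℕ}
    (hv : Admissible (spine (a + b + 1)) L v) (hgap : v a + 2 ≤ v (a + 1)) :
    Admissible (spine (a + b + 2)) L (insertValue v a (v a + 1) (by omega) (by omega)) :=
  (hv.insertValue_triangleSpine hgap).comp (admissible_id_spine (triangleSpine_sum a b).symm)

end Moves

section Slice

def thinModel (l : List ℕ) (hl : IsThinPattern l) : NecThin :=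
  ⟨⟨biModel l, l, ⟨(neckOfIso l).symm⟩⟩, l, hl.1, hl.2, ⟨(neckOfIso l).symm⟩⟩

variable {N : Nec} {L : List ℕ} (E : N.obj ≅ biModel L)

def sliceObj (l : List ℕ) (hl : IsThinPattern l) (v : ℕ →o ℕ) (hv : Admissible l L v) :
    CostructuredArrow thinInclusion N :=
  CostructuredArrow.mk (Y := thinModel l hl)
    (ObjectProperty.homMk (show biModel l ⟶ N.obj from biModelMap v hv ≫ E.inv))

lemma zigzag_sliceObj {l l' : List ℕ} {hl : IsThinPattern l} {hl' : IsThinPattern l'}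
    {v v' w : ℕ →o ℕ} {hv : Admissible l L v} {hv' : Admissible l' L v'} (hw : Admissible l l' w)
    (h : ∀ x ≤ l.sum, v' (w x) = v x) :
    Zigzag (sliceObj E l hl v hv) (sliceObj E l' hl' v' hv') :=
  Zigzag.of_hom <| CostructuredArrow.homMk
    (ObjectProperty.homMk (ObjectProperty.homMk (biModelMap w hw))) <| by
      apply ObjectProperty.hom_ext
      show biModelMap w hw ≫ biModelMap v' hv' ≫ E.inv = biModelMap v hv ≫ E.inv
      rw [← Category.assoc, biModelMap_comp, biModelMap_congr _ _ h]

abbrev spineObj (k : ℕ) (v : ℕ →o ℕ) (hv : Admissible (spine k) L v) :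
    CostructuredArrow thinInclusion N :=
  sliceObj E (spine k) (isThinPattern_spine k) v hv

def baseObj : CostructuredArrow thinInclusion N :=
  spineObj E L.sum OrderHom.id (admissible_id_spine rfl)

lemma zigzag_spineObj_collapse {k a : ℕ} {v : ℕ →o ℕ} (hv : Admissible (spine (k + 1)) L v)
    (ha : a ≤ k) (hdeg : v (a + 1) = v a) :
    Zigzag (spineObj E (k + 1) v hv) (spineObj E k _ (hv.comp_skipAt ha hdeg)) :=
  zigzag_sliceObj E (admissible_collapseAt ha) fun x _ => apply_skipAt_collapseAt hdeg x

lemma zigzag_spineObj_insert {a b : ℕ} {v : ℕ →o ℕ} (hv : Admissible (spine (a + b + 1)) L v)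
    (hgap : v a + 2 ≤ v (a + 1)) :
    Zigzag (spineObj E (a + b + 1) v hv) (spineObj E (a + b + 2) _ (hv.insertValue_spine hgap)) :=
  (zigzag_sliceObj E (hl' := isThinPattern_triangleSpine a b)
    (hv' := hv.insertValue_triangleSpine hgap) (admissible_skipAt_triangleSpine a b)
    fun x _ => insertValue_skipAt _ _ _ _ _ x).trans
  (zigzag_sliceObj E (admissible_id_spine (triangleSpine_sum a b).symm) fun _ _ => rfl).symm

lemma zigzag_baseObj_of_strict {k : ℕ} {v : ℕ →o ℕ} (hv : Admissible (spine k) L v)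
    (hst : ∀ i < k, v i < v (i + 1)) : Zigzag (spineObj E k v hv) (baseObj E) := by
  induction hd : L.sum - k using Nat.strong_induction_on generalizing k v with
  | _ d ih =>
  obtain ⟨h₀, hk, -⟩ := admissible_spine_iff.1 hv
  by_cases hunit : ∀ i < k, v (i + 1) = v i + 1
  · have hid := apply_eq_self_of_unit_steps h₀ hunit
    have hkL : k = L.sum := (hid k le_rfl).symm.trans hk
    exact zigzag_sliceObj E (admissible_id_spine (by simpa using hkL)) fun x hx =>
      (hid x (by simpa using hx)).symm
  · push Not at hunit
    obtain ⟨a, hak, hne⟩ := hunit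
    obtain ⟨b, rfl⟩ : ∃ b, k = a + b + 1 := ⟨k - a - 1, by omega⟩
    have hgap : v a + 2 ≤ v (a + 1) := by have := hst a hak; omega
    have hst' := insertValue_lt_succ hst hak hgap
    -- the new sequence still increases strictly, so it has at most `L.sum + 1` terms
    have hsum := (admissible_spine_iff.1 (hv.insertValue_spine hgap)).2.1
    have hle := le_apply_of_lt_succ hst' (a + b + 2) le_rfl
    exact (zigzag_spineObj_insert E hv hgap).trans (ih _ (by omega) _ hst' rfl)

lemma zigzag_baseObj_of_spine {k : ℕ} {v : ℕ →o ℕ} (hv : Admissible (spine k) L v) :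
    Zigzag (spineObj E k v hv) (baseObj E) := by
  induction k generalizing v with
  | zero => exact zigzag_baseObj_of_strict E hv fun i hi => absurd hi (Nat.not_lt_zero i)
  | succ k ih =>
    by_cases hst : ∀ i < k + 1, v i < v (i + 1)
    · exact zigzag_baseObj_of_strict E hv hst
    · push Not at hst
      obtain ⟨a, ha, hle⟩ := hst
      have hdeg : v (a + 1) = v a := le_antisymm hle (v.monotone (Nat.le_succ a))
      exact (zigzag_spineObj_collapse E hv (by omega) hdeg).trans (ih _)

lemma zigzag_baseObj (X : CostructuredArrow thinInclusion N) : Zigzag X (baseObj E) := by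
  obtain ⟨l, hl₁, hl₂, ⟨u⟩⟩ := X.left.property
  let u' : X.left.obj.obj ≅ biModel l := u ≪≫ neckOfIso l
  obtain ⟨v, hv, hG⟩ := exists_biModelMap_eq (u'.inv ≫ X.hom.hom ≫ E.hom)
  have hX : Zigzag (sliceObj E l ⟨hl₁, hl₂⟩ v hv) X := Zigzag.of_hom <| CostructuredArrow.homMk
    (ObjectProperty.homMk (ObjectProperty.homMk u'.inv)) <| by
      apply ObjectProperty.hom_ext
      show u'.inv ≫ X.hom.hom = biModelMap v hv ≫ E.inv
      rw [← hG, Category.assoc, Category.assoc, Iso.hom_inv_id, Category.comp_id]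
  have hspine : Zigzag (spineObj E l.sum v (hv.comp (admissible_id_spine rfl)))
      (sliceObj E l ⟨hl₁, hl₂⟩ v hv) :=
    zigzag_sliceObj E (admissible_id_spine rfl) fun _ _ => rfl
  exact hX.symm.trans (hspine.symm.trans (zigzag_baseObj_of_spine E _))

end Slice

theorem isConnected_costructuredArrow_thinInclusion (N : Nec) :
    IsConnected (CostructuredArrow thinInclusion N) := by
  obtain ⟨L, ⟨e⟩⟩ := N.property
  let E := e ≪≫ neckOfIso L
  have : Nonempty (CostructuredArrow thinInclusion N) := ⟨baseObj E⟩
  exact zigzag_isConnected fun X Y => (zigzag_baseObj E X).trans (zigzag_baseObj E Y).symm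

end Necklace

/-- The inclusion `Nec_thinᵒᵖ ↪ Necᵒᵖ` is 1-final: every slice category
`Nec_{thin/N}` is connected; consequently the colimit of any functor
`F : Necᵒᵖ ⥤ C` to a 1-category agrees with the colimit of its restriction to
`Nec_thinᵒᵖ`. -/
theorem stmt_7 :
    (∀ N : Nec, IsConnected (CostructuredArrow thinInclusion N)) ∧
    thinInclusion.op.Final ∧
    ∀ (C : Type) (_ : SmallCategory C) (F : Necᵒᵖ ⥤ C)
      (_ : HasColimit F) (_ : HasColimit (thinInclusion.op ⋙ F)),
      Nonempty (colimit (thinInclusion.op ⋙ F) ≅ colimit F) := by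
  have : thinInclusion.Initial := ⟨Necklace.isConnected_costructuredArrow_thinInclusion⟩
  exact ⟨Necklace.isConnected_costructuredArrow_thinInclusion, inferInstance,
    fun _ _ F _ _ => ⟨Functor.Final.colimitIso thinInclusion.op F⟩⟩

end
end

section
/- Let X be a simplicial set. Then the set of morphisms of the homotopy category ho(X) is in bijection with the quotient (⨆_{n ≥ 0} X₁ ×_{X₀} ⋯ ×_{X₀} X₁)/∼ of composable strings of edges of X, where ∼ is the equivalence relation generated by: (f₁, …, f_n) ∼ (f₁, …, f_{i-1}, g, f_{i+2}, …, f_n) whenever there is a 2-simplex of X with faces f_i, f_{i+1}, g witnessing g = f_{i+1} ∘ f_i, and (f₁, …, f_n) ∼ (f₁, …, f_{i-1}, f_{i+1}, …, f_n) whenever f_i is a degenerate 1-simplex. -/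
open CategoryTheory

local notation:1000 X " _⦋" n "⦌" => Prefunctor.obj (Functor.toPrefunctor (X : SimplicialObject _)) (Opposite.op (SimplexCategory.mk n))

variable (X : SSet.{0})

/-- The vertices of `X`, as the underlying type of the graph of `0`- and `1`-simplices. -/
def HoVert : Type := X _⦋0⦌

instance : Quiver (HoVert X) :=
  ⟨fun a b => {e : X _⦋1⦌ // X.δ 1 e = a ∧ X.δ 0 e = b}⟩

/-- The relations on the free category on the edges of `X`: composition witnessed by
`2`-simplices, and degenerate edges are identities. -/
inductive HoRel : HomRel (Paths (HoVert X))
  | tri {a b c : HoVert X} (f : a ⟶ b) (g : b ⟶ c) (h : a ⟶ c) (σ : X _⦋2⦌)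
      (hf : X.δ 2 σ = f.1) (hg : X.δ 0 σ = g.1) (hh : X.δ 1 σ = h.1) :
      HoRel (f.toPath ≫ g.toPath) h.toPath
  | degen (a : HoVert X) (f : a ⟶ a) (hf : X.σ 0 a = f.1) :
      HoRel f.toPath (𝟙 ((Paths.of (HoVert X)).obj a))

/-- The homotopy category `ho(X)` of a simplicial set `X`: the free category on the
edges of `X` modulo the relations generated by the `2`-simplices and the degenerate
`1`-simplices (this is the value at `X` of the left adjoint of the nerve). -/
def HoCat : Type := CategoryTheory.Quotient (HoRel X)

noncomputable instance : Category (HoCat X) :=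
  inferInstanceAs (Category (CategoryTheory.Quotient (HoRel X)))

/-- `EdgeChain X x y l` says that `l` is a composable string of edges of `X`
from `x` to `y`; for `l = []` this requires `x = y` (the `n = 0` term `X₀`). -/
def EdgeChain (x y : X _⦋0⦌) : List (X _⦋1⦌) → Prop
  | [] => x = y
  | e :: l => X.δ 1 e = x ∧ EdgeChain (X.δ 0 e) y l

/-- Composable strings of edges of `X`: the disjoint union over `n ≥ 0` of
`X₁ ×_{X₀} ⋯ ×_{X₀} X₁`. -/
def Strings : Type :=
  Σ x y : X _⦋0⦌, {l : List (X.obj (Opposite.op (SimplexCategory.mk 1))) // EdgeChain X x y l}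

/-- The generating relations on strings: composing two consecutive edges along a
`2`-simplex, and deleting a degenerate edge. -/
inductive StrRel : Strings X → Strings X → Prop
  | tri (x y : X _⦋0⦌) (pre post : List (X _⦋1⦌)) (f g h : X _⦋1⦌) (σ : X _⦋2⦌)
      (hf : X.δ 2 σ = f) (hg : X.δ 0 σ = g) (hh : X.δ 1 σ = h)
      (hc : EdgeChain X x y (pre ++ f :: g :: post))
      (hc' : EdgeChain X x y (pre ++ h :: post)) :
      StrRel ⟨x, y, pre ++ f :: g :: post, hc⟩ ⟨x, y, pre ++ h :: post, hc'⟩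
  | degen (x y v : X _⦋0⦌) (pre post : List (X _⦋1⦌))
      (hc : EdgeChain X x y (pre ++ (X.σ 0 v :: post : List (X _⦋1⦌))))
      (hc' : EdgeChain X x y (pre ++ post)) :
      StrRel ⟨x, y, pre ++ (X.σ 0 v :: post : List (X _⦋1⦌)), hc⟩ ⟨x, y, pre ++ post, hc'⟩

/-! A morphism of `ho(X)` is a class of paths in the free category on the edges of `X`, and a
path is the same thing as the composable string of its edges. Under this identification the
closure of the generating relations under pre- and postcomposition (a `2`-simplex replaces
`u ≫ f ≫ g ≫ w` by `u ≫ h ≫ w`, a degenerate edge is dropped from `u ≫ s₀ v ≫ w`) is exactly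
the relation on strings, so the two quotients agree. -/

namespace CategoryTheory

variable {C : Type*} [Category C]

inductive HomRel.OnSigma (r : HomRel C) : (Σ a b : C, a ⟶ b) → (Σ a b : C, a ⟶ b) → Prop
  | intro {a b : C} {f g : a ⟶ b} : r f g → HomRel.OnSigma r ⟨a, b, f⟩ ⟨a, b, g⟩

def Quotient.sigmaHomEquiv (r : HomRel C) :
    Quot (HomRel.OnSigma (HomRel.CompClosure r)) ≃ Σ a b : Quotient r, a ⟶ b where
  toFun := Quot.lift (fun f => ⟨⟨f.1⟩, ⟨f.2.1⟩, Quot.mk _ f.2.2⟩) fun _ _ ⟨h⟩ => by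
    rw [Quot.sound h]
  invFun f := Quot.lift (fun g => Quot.mk _ ⟨f.1.as, f.2.1.as, g⟩) (fun _ _ h => Quot.sound ⟨h⟩)
    f.2.2
  left_inv := Quot.ind fun _ => rfl
  right_inv := fun ⟨_, _, f⟩ => Quot.inductionOn f fun _ => rfl

end CategoryTheory

section

variable {X}

namespace EdgeChain

theorem append {l₁ l₂ : List (X _⦋1⦌)} {x m y : X _⦋0⦌}
    (h₁ : EdgeChain X x m l₁) (h₂ : EdgeChain X m y l₂) : EdgeChain X x y (l₁ ++ l₂) := by
  induction l₁ generalizing x with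
  | nil => exact h₁ ▸ h₂
  | cons e l ih => exact ⟨h₁.1, ih h₁.2⟩

theorem exists_of_append : ∀ {l₁ l₂ : List (X _⦋1⦌)} {x y : X _⦋0⦌},
    EdgeChain X x y (l₁ ++ l₂) → ∃ m, EdgeChain X x m l₁ ∧ EdgeChain X m y l₂
  | [], _, x, _, h => ⟨x, rfl, h⟩
  | _ :: _, _, _, _, h =>
    have ⟨m, h₁, h₂⟩ := exists_of_append h.2
    ⟨m, ⟨h.1, h₁⟩, h₂⟩

theorem source_unique : ∀ {l : List (X _⦋1⦌)} {x x' y : X _⦋0⦌},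
    EdgeChain X x y l → EdgeChain X x' y l → x = x'
  | [], _, _, _, h, h' => h.trans h'.symm
  | _ :: _, _, _, _, h, h' => h.1.symm.trans h'.1

theorem target_unique : ∀ {l : List (X _⦋1⦌)} {x y y' : X _⦋0⦌},
    EdgeChain X x y l → EdgeChain X x y' l → y = y'
  | [], _, _, _, h, h' => h.symm.trans h'
  | _ :: _, _, _, _, h, h' => target_unique h.2 h'.2

end EdgeChain

namespace HoVert

def homOfEdge (e : X _⦋1⦌) {a b : HoVert X} (ha : X.δ 1 e = a) (hb : X.δ 0 e = b) : a ⟶ b :=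
  ⟨e, ha, hb⟩

def edgeList {a : HoVert X} : ∀ {b : HoVert X}, Quiver.Path a b → List (X _⦋1⦌)
  | _, .nil => []
  | _, .cons p e => edgeList p ++ [e.1]

@[simp]
theorem edgeList_nil {a : HoVert X} : edgeList (Quiver.Path.nil : Quiver.Path a a) = [] := rfl

@[simp]
theorem edgeList_cons {a b c : HoVert X} (p : Quiver.Path a b) (e : b ⟶ c) :
    edgeList (p.cons e) = edgeList p ++ [e.1] := rfl

theorem edgeList_comp {a b c : HoVert X} (p : Quiver.Path a b) (q : Quiver.Path b c) :
    edgeList (p.comp q) = edgeList p ++ edgeList q := by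
  induction q with
  | nil => simp
  | cons q e ih => simp [ih]

/- `simp` and `rw` cannot use `edgeList_comp` when the endpoints are typed `X _⦋0⦌` rather than
`HoVert X`; this form is applied by unification instead. -/
theorem edgeList_comp_comp {a b c d : HoVert X} (u : Quiver.Path a b) (v : Quiver.Path b c)
    (w : Quiver.Path c d) :
    edgeList (u.comp (v.comp w)) = edgeList u ++ (edgeList v ++ edgeList w) :=
  (edgeList_comp u _).trans (congrArg (edgeList u ++ ·) (edgeList_comp v w))

theorem edgeChain_edgeList {a b : HoVert X} : ∀ p : Quiver.Path a b, EdgeChain X a b (edgeList p)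
  | .nil => rfl
  | .cons p e => (edgeChain_edgeList p).append ⟨e.2.1, e.2.2⟩

theorem edgeList_injective {a b : HoVert X} :
    Function.Injective (edgeList : Quiver.Path a b → List (X _⦋1⦌)) := by
  intro p q h
  induction p with
  | nil => cases q with
    | nil => rfl
    | cons q e => simp at h
  | cons p e ih => cases q with
    | nil => simp at h
    | cons q e' =>
      obtain ⟨hpq, hee'⟩ := List.append_inj' h rfl
      simp only [List.cons.injEq, and_true] at hee'
      obtain rfl : _ = _ := e'.2.1.symm.trans (hee' ▸ e.2.1)
      obtain rfl := Subtype.ext hee'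
      rw [ih hpq]

theorem exists_edgeList_eq : ∀ {l : List (X _⦋1⦌)} {a b : HoVert X},
    EdgeChain X a b l → ∃ p : Quiver.Path a b, edgeList p = l
  | [], _, _, rfl => ⟨.nil, rfl⟩
  | e :: _, _, _, ⟨rfl, h⟩ =>
    have ⟨p, hp⟩ := exists_edgeList_eq h
    ⟨(homOfEdge e rfl rfl).toPath.comp p, (edgeList_comp _ p).trans (congrArg (e :: ·) hp)⟩

noncomputable def pathEquivEdgeChain (a b : HoVert X) :
    Quiver.Path a b ≃ {l : List (X _⦋1⦌) // EdgeChain X a b l} :=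
  Equiv.ofBijective (fun p => ⟨edgeList p, edgeChain_edgeList p⟩)
    ⟨fun _ _ h => edgeList_injective (congrArg Subtype.val h),
     fun ⟨_, h⟩ => (exists_edgeList_eq h).imp fun _ hp => Subtype.ext hp⟩

end HoVert

open HoVert

theorem Strings.mk_eq_mk {x y : X _⦋0⦌} {l l' : List (X _⦋1⦌)} {hc : EdgeChain X x y l}
    {hc' : EdgeChain X x y l'} (hl : l = l') : (⟨x, y, l, hc⟩ : Strings X) = ⟨x, y, l', hc'⟩ := by
  subst hl; rfl

theorem StrRel.tri_of_eq {x y : X _⦋0⦌} {l l' pre post : List (X _⦋1⦌)} {f g h : X _⦋1⦌}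
    {σ : X _⦋2⦌} (hf : X.δ 2 σ = f) (hg : X.δ 0 σ = g) (hh : X.δ 1 σ = h)
    (hl : l = pre ++ f :: g :: post) (hl' : l' = pre ++ h :: post)
    {hc : EdgeChain X x y l} {hc' : EdgeChain X x y l'} :
    StrRel X ⟨x, y, l, hc⟩ ⟨x, y, l', hc'⟩ := by
  subst hl hl'
  exact .tri x y pre post f g h σ hf hg hh hc hc'

theorem StrRel.degen_of_eq {x y v : X _⦋0⦌} {l l' pre post : List (X _⦋1⦌)}
    (hl : l = pre ++ (X.σ 0 v :: post : List (X _⦋1⦌))) (hl' : l' = pre ++ post)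
    {hc : EdgeChain X x y l} {hc' : EdgeChain X x y l'} :
    StrRel X ⟨x, y, l, hc⟩ ⟨x, y, l', hc'⟩ := by
  subst hl hl'
  exact .degen x y v pre post hc hc'

variable (X) in
noncomputable def pathsSigmaEquivStrings : (Σ a b : Paths (HoVert X), a ⟶ b) ≃ Strings X :=
  Equiv.sigmaCongrRight fun a => Equiv.sigmaCongrRight fun b => pathEquivEdgeChain a b

theorem pathsSigmaEquivStrings_symm_mk {x y : X _⦋0⦌} {l : List (X _⦋1⦌)}
    (hc : EdgeChain X x y l) {p : @Quiver.Path (HoVert X) _ x y} (hp : edgeList p = l) :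
    (pathsSigmaEquivStrings X).symm ⟨x, y, l, hc⟩ = ⟨x, y, p⟩ :=
  (Equiv.symm_apply_eq _).2 (Strings.mk_eq_mk hp.symm)

theorem strRel_of_onSigma {p q : Σ a b : Paths (HoVert X), a ⟶ b}
    (h : HomRel.OnSigma (HomRel.CompClosure (HoRel X)) p q) :
    StrRel X (pathsSigmaEquivStrings X p) (pathsSigmaEquivStrings X q) := by
  obtain ⟨⟨a, _, u, _, _, w, hr⟩⟩ := h
  cases hr with
  | tri f g h σ hf hg hh =>
    exact StrRel.tri_of_eq (pre := edgeList u) (post := edgeList w) hf hg hh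
      (edgeList_comp_comp u _ w) (edgeList_comp_comp u _ w)
  | degen _ f hf =>
    exact StrRel.degen_of_eq (v := a) (pre := edgeList u) (post := edgeList w)
      ((edgeList_comp_comp u f.toPath w).trans (congrArg (edgeList u ++ · :: edgeList w) hf.symm))
      (edgeList_comp_comp u _ w)

theorem onSigma_of_strRel {s t : Strings X} (h : StrRel X s t) :
    HomRel.OnSigma (HomRel.CompClosure (HoRel X))
      ((pathsSigmaEquivStrings X).symm s) ((pathsSigmaEquivStrings X).symm t) := by
  cases h with
  | tri x y pre post f g h σ hf hg hh hc hc' =>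
    obtain ⟨m, hpre, hfm, hgf, hpost⟩ := hc.exists_of_append
    obtain ⟨m', hpre', hhm, hpost'⟩ := hc'.exists_of_append
    obtain rfl := hpre.target_unique hpre'
    obtain ⟨u, rfl⟩ := exists_edgeList_eq hpre
    obtain ⟨w, rfl⟩ := exists_edgeList_eq hpost
    let F := homOfEdge f hfm rfl
    let G := homOfEdge g hgf rfl
    let H := homOfEdge h hhm (hpost'.source_unique hpost)
    rw [pathsSigmaEquivStrings_symm_mk hc (p := u.comp ((F.toPath.comp G.toPath).comp w))
        (edgeList_comp_comp u _ w),
      pathsSigmaEquivStrings_symm_mk hc' (p := u.comp (H.toPath.comp w))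
        (edgeList_comp_comp u _ w)]
    exact ⟨.intro (C := Paths (HoVert X)) _ _ u _ _ w (HoRel.tri F G H σ hf hg hh)⟩
  | degen x y v pre post hc hc' =>
    obtain ⟨m, hpre, hvm, hpost⟩ := hc.exists_of_append
    obtain ⟨m', hpre', hpost'⟩ := hc'.exists_of_append
    obtain rfl := hpre.target_unique hpre'
    obtain rfl : v = m := (X.δ_comp_σ_succ_apply 0 v).symm.trans hvm
    obtain ⟨u, rfl⟩ := exists_edgeList_eq hpre
    obtain ⟨w, rfl⟩ := exists_edgeList_eq hpost'
    let D := homOfEdge (X.σ 0 v) hvm (X.δ_comp_σ_self_apply 0 v)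
    rw [pathsSigmaEquivStrings_symm_mk hc (p := u.comp (D.toPath.comp w))
        (edgeList_comp_comp u _ w),
      pathsSigmaEquivStrings_symm_mk hc' (p := u.comp (Quiver.Path.nil.comp w))
        (edgeList_comp_comp u _ w)]
    exact ⟨.intro (C := Paths (HoVert X)) _ _ u _ _ w (HoRel.degen v D rfl)⟩

theorem strRel_pathsSigmaEquivStrings_iff {p q : Σ a b : Paths (HoVert X), a ⟶ b} :
    StrRel X (pathsSigmaEquivStrings X p) (pathsSigmaEquivStrings X q) ↔
      HomRel.OnSigma (HomRel.CompClosure (HoRel X)) p q :=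
  ⟨fun h => by simpa using onSigma_of_strRel h, strRel_of_onSigma⟩

end

/-- The set of morphisms of the homotopy category `ho(X)` of a simplicial set `X` is
in bijection with the quotient of the set of composable strings of edges of `X` by the
equivalence relation generated by composition along `2`-simplices and deletion of
degenerate edges. -/
theorem stmt_8 :
    Nonempty (Quot (StrRel X) ≃ Σ a b : HoCat X, a ⟶ b) :=
  ⟨(Quot.congr (pathsSigmaEquivStrings X) fun _ _ =>
      strRel_pathsSigmaEquivStrings_iff.symm).symm.trans (Quotient.sigmaHomEquiv (HoRel X))⟩
end

section
/- Let f : X → X' be a morphism of right fibrations over a common base Y of simplicial spaces (i.e. p : X → Y and p' : X' → Y are right fibrations and p' ∘ f = p). Then f is an equivalence if and only if the map f₀ : X₀ → X'₀ on zero-simplices is an equivalence. -/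
open CategoryTheory CategoryTheory.Limits Simplicial Opposite

variable {C : Type*} [Category C]

/-- A map `p : X ⟶ Y` of simplicial objects is a right fibration if for all `n ≥ 1`
the square formed by `d₀ : Xₙ ⟶ Xₙ₋₁`, `d₀ : Yₙ ⟶ Yₙ₋₁` and the components of `p`
is a pullback square. -/
def IsRightFibration {X Y : SimplicialObject C} (p : X ⟶ Y) : Prop :=
  ∀ n : ℕ, IsPullback (X.δ (0 : Fin (n + 2)))
    (p.app (op (SimplexCategory.mk (n + 1)))) (p.app (op (SimplexCategory.mk n)))
    (Y.δ (0 : Fin (n + 2)))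

/-! Induction on the simplicial degree. If `fₙ` is an isomorphism, pasting the pullback square
of `p` in degree `n + 1` with the square `fₙ, pₙ, p'ₙ, 𝟙` shows that `X_{n+1}` is a pullback of
`X'ₙ → Yₙ ← Y_{n+1}`; so is `X'_{n+1}`, by the pullback square of `p'`, and `f_{n+1}` is the
comparison map between these two pullbacks, hence an isomorphism. -/

theorem CategoryTheory.IsPullback.isIso_of_fst_eq_of_snd_eq {P P' X Y Z : C}
    {fst : P ⟶ X} {snd : P ⟶ Y} {fst' : P' ⟶ X} {snd' : P' ⟶ Y} {f : X ⟶ Z} {g : Y ⟶ Z}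
    (h : IsPullback fst snd f g) (h' : IsPullback fst' snd' f g) (e : P ⟶ P')
    (he₁ : e ≫ fst' = fst) (he₂ : e ≫ snd' = snd) : IsIso e := by
  have left : IsPullback e snd snd' (𝟙 Y) :=
    IsPullback.of_right (by simpa [he₁] using h) (by simp [he₂]) h'
  exact left.isIso_fst_of_isIso

section

variable {X X' Y : SimplicialObject C} {p : X ⟶ Y} {p' : X' ⟶ Y}

theorem IsRightFibration.isIso_app_succ (hp : IsRightFibration p) (hp' : IsRightFibration p')
    {f : X ⟶ X'} (hf : f ≫ p' = p) (n : ℕ) [IsIso (f.app (op ⦋n⦌))] :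
    IsIso (f.app (op ⦋n + 1⦌)) := by
  have hf_app (k : ℕ) : f.app (op ⦋k⦌) ≫ p'.app (op ⦋k⦌) = p.app (op ⦋k⦌) := by
    rw [← hf, NatTrans.comp_app]
  have square : IsPullback (f.app (op ⦋n⦌)) (p.app _) (p'.app _) (𝟙 _) :=
    IsPullback.of_horiz_isIso ⟨by simp [hf_app]⟩
  have pasted := (hp n).paste_horiz square
  rw [Category.comp_id] at pasted
  exact pasted.isIso_of_fst_eq_of_snd_eq (hp' n) _
    (SimplicialObject.δ_naturality f 0).symm (hf_app _)

theorem IsRightFibration.isIso_app_of_isIso_app_zero (hp : IsRightFibration p)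
    (hp' : IsRightFibration p') {f : X ⟶ X'} (hf : f ≫ p' = p)
    (h₀ : IsIso (f.app (op ⦋0⦌))) (n : ℕ) : IsIso (f.app (op ⦋n⦌)) := by
  induction n with
  | zero => exact h₀
  | succ n ih => exact hp.isIso_app_succ hp' hf n

end

/-- A morphism `f : X ⟶ X'` of right fibrations over a common base `Y` is an
equivalence if and only if it is an equivalence on zero-simplices. -/
theorem stmt_9 {X X' Y : SimplicialObject C} (p : X ⟶ Y) (p' : X' ⟶ Y)
    (hp : IsRightFibration p) (hp' : IsRightFibration p')
    (f : X ⟶ X') (hf : f ≫ p' = p) :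
    IsIso f ↔ IsIso (f.app (op (SimplexCategory.mk 0))) := by
  rw [NatTrans.isIso_iff_isIso_app]
  refine ⟨fun h ↦ h _, fun h₀ Δ ↦ ?_⟩
  simpa using hp.isIso_app_of_isIso_app_zero hp' hf h₀ Δ.unop.len
end

section
/- Equifibered morphisms of commutative monoids form the right class of a factorization system on commutative monoids, and are stable under base change and composition; moreover, if f : M → N is equifibered and N is a free commutative monoid, then M is free. -/
/-- A map of commutative monoids (in `Set`) is equifibered if the square formed by
the addition maps and `f × f`, `f` is a pullback of sets. -/
def Equifibered {M N : Type*} [AddCommMonoid M] [AddCommMonoid N] (f : M →+ N) : Prop :=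
  ∀ (m : M) (n₁ n₂ : N), f m = n₁ + n₂ →
    ∃! p : M × M, p.1 + p.2 = m ∧ f p.1 = n₁ ∧ f p.2 = n₂

/-- `l` is left orthogonal to all equifibered maps: unique lifts exist in every
commutative square against an equifibered map. -/
def LeftOrthToEquifibered {M P : Type} [AddCommMonoid M] [AddCommMonoid P]
    (l : M →+ P) : Prop :=
  ∀ {A B : Type} [AddCommMonoid A] [AddCommMonoid B] (r : A →+ B), Equifibered r →
    ∀ (u : M →+ A) (v : P →+ B), v.comp l = r.comp u →
      ∃! d : P →+ A, d.comp l = u ∧ r.comp d = v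

/-- The pullback of commutative monoids `M ×_N P`, as a submonoid of `M × P`. -/
def pullbackMonoid {M N P : Type} [AddCommMonoid M] [AddCommMonoid N] [AddCommMonoid P]
    (f : M →+ N) (g : P →+ N) : AddSubmonoid (M × P) where
  carrier := {q | f q.1 = g q.2}
  zero_mem' := by simp
  add_mem' := by intro a b ha hb; simp only [Set.mem_setOf_eq, Prod.fst_add, Prod.snd_add,
    map_add] at *; rw [ha, hb]

/-- A commutative monoid is free if it is isomorphic to a monoid of multisets. -/
def IsFreeCommMonoid (M : Type) [AddCommMonoid M] : Prop :=
  ∃ S : Type, Nonempty (M ≃+ Multiset S)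

/-! An equifibered map is injective, because if `f a = f b` then `(a, b)` and `(b, a)` lift the
same decomposition of `f (a + b)`. So being equifibered means being injective with image closed
under taking summands, and each claim becomes a statement about images. Composites and base changes
visibly keep this property. Any `f` factors through the summand-closure of its image, and a map
whose target consists of summands of its values lifts uniquely against equifibered maps. Finally, a
summand-closed submonoid of `Multiset S` consists of the multisets all of whose singletons lie in
it, so it is free on those singletons. -/

def IsSummandClosed {N : Type*} [AddCommMonoid N] (s : Set N) : Prop :=
  ∀ a b : N, a + b ∈ s → a ∈ s

section Equifibered

variable {M N P : Type*} [AddCommMonoid M] [AddCommMonoid N] [AddCommMonoid P]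

theorem Equifibered.injective {f : M →+ N} (hf : Equifibered f) : Function.Injective f := by
  intro a b hab
  obtain ⟨p, -, hp⟩ := hf (a + b) (f a) (f b) (map_add f a b)
  have hab' : ((a, b) : M × M) = p := hp (a, b) ⟨rfl, rfl, rfl⟩
  have hba : ((b, a) : M × M) = p := hp (b, a) ⟨add_comm b a, hab.symm, hab⟩
  exact congrArg Prod.fst (hab'.trans hba.symm)

theorem Equifibered.isSummandClosed_range {f : M →+ N} (hf : Equifibered f) :
    IsSummandClosed (Set.range f) := by
  rintro n₁ n₂ ⟨m, hm⟩
  obtain ⟨p, ⟨-, hp₁, -⟩, -⟩ := hf m n₁ n₂ hm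
  exact ⟨p.1, hp₁⟩

theorem equifibered_iff {f : M →+ N} :
    Equifibered f ↔ Function.Injective f ∧ IsSummandClosed (Set.range f) := by
  refine ⟨fun hf => ⟨hf.injective, hf.isSummandClosed_range⟩, ?_⟩
  rintro ⟨hinj, hclosed⟩ m n₁ n₂ hm
  have hsum : n₁ + n₂ ∈ Set.range f := ⟨m, hm⟩
  obtain ⟨m₁, hm₁⟩ := hclosed n₁ n₂ hsum
  obtain ⟨m₂, hm₂⟩ := hclosed n₂ n₁ (add_comm n₁ n₂ ▸ hsum)
  refine ⟨(m₁, m₂), ⟨hinj (by rw [map_add, hm₁, hm₂, hm]), hm₁, hm₂⟩, ?_⟩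
  rintro ⟨q₁, q₂⟩ ⟨-, hq₁, hq₂⟩
  exact Prod.ext (hinj (hq₁.trans hm₁.symm)) (hinj (hq₂.trans hm₂.symm))

theorem AddEquiv.equifibered (e : M ≃+ N) : Equifibered (e : M →+ N) :=
  equifibered_iff.2 ⟨e.injective, fun a _ _ => e.surjective a⟩

theorem Equifibered.comp {f : M →+ N} {g : N →+ P} (hg : Equifibered g) (hf : Equifibered f) :
    Equifibered (g.comp f) := by
  refine equifibered_iff.2 ⟨hg.injective.comp hf.injective, ?_⟩
  rintro p₁ p₂ ⟨m, hm⟩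
  obtain ⟨n₁, rfl⟩ := hg.isSummandClosed_range p₁ p₂ ⟨f m, hm⟩
  obtain ⟨n₂, rfl⟩ := hg.isSummandClosed_range p₂ (g n₁) (add_comm (g n₁) p₂ ▸ ⟨f m, hm⟩)
  have hfm : f m = n₁ + n₂ := hg.injective (by rw [map_add]; exact hm)
  obtain ⟨m₁, hm₁⟩ := hf.isSummandClosed_range n₁ n₂ ⟨m, hfm⟩
  exact ⟨m₁, by rw [AddMonoidHom.comp_apply, hm₁]⟩

theorem AddSubmonoid.equifibered_subtype {S : AddSubmonoid N} (hS : IsSummandClosed (S : Set N)) :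
    Equifibered S.subtype := by
  refine equifibered_iff.2 ⟨Subtype.val_injective, ?_⟩
  rintro n₁ n₂ ⟨x, hx⟩
  exact ⟨⟨n₁, hS n₁ n₂ (hx ▸ x.2)⟩, rfl⟩

end Equifibered

section BaseChange

variable {M N P : Type} [AddCommMonoid M] [AddCommMonoid N] [AddCommMonoid P]

theorem Equifibered.pullback_snd {f : M →+ N} (hf : Equifibered f) (g : P →+ N) :
    Equifibered ((AddMonoidHom.snd M P).comp (pullbackMonoid f g).subtype) := by
  refine equifibered_iff.2 ⟨?_, ?_⟩
  · rintro ⟨⟨a₁, a₂⟩, ha⟩ ⟨⟨b₁, b₂⟩, hb⟩ (h₂ : a₂ = b₂)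
    have h₁ : a₁ = b₁ := hf.injective (by rw [ha, hb, h₂])
    exact Subtype.ext (Prod.ext h₁ h₂)
  · rintro p₁ p₂ ⟨⟨⟨m, p⟩, hmp⟩, hp⟩
    have hfm : f m = g p₁ + g p₂ := by rw [hmp, ← map_add]; exact congrArg g hp
    obtain ⟨m₁, hm₁⟩ := hf.isSummandClosed_range (g p₁) (g p₂) ⟨m, hfm⟩
    exact ⟨⟨(m₁, p₁), hm₁⟩, rfl⟩

end BaseChange

section Factorization

variable {M N : Type} [AddCommMonoid M] [AddCommMonoid N]

def summandClosure (f : M →+ N) : AddSubmonoid N where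
  carrier := {n | ∃ n' m, f m = n + n'}
  zero_mem' := ⟨0, 0, by simp⟩
  add_mem' := by
    rintro a b ⟨a', ma, ha⟩ ⟨b', mb, hb⟩
    exact ⟨a' + b', ma + mb, by rw [map_add, ha, hb]; abel⟩

theorem mem_summandClosure (f : M →+ N) (m : M) : f m ∈ summandClosure f :=
  ⟨0, m, (add_zero _).symm⟩

theorem isSummandClosed_summandClosure (f : M →+ N) :
    IsSummandClosed (summandClosure f : Set N) := by
  rintro a b ⟨n', m, hm⟩
  exact ⟨b + n', m, by rw [hm, add_assoc]⟩

theorem Equifibered.existsUnique_lift {A B P : Type*} [AddCommMonoid A] [AddCommMonoid B]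
    [AddCommMonoid P] {r : A →+ B} (hr : Equifibered r) (v : P →+ B)
    (hv : ∀ p, v p ∈ Set.range r) : ∃! d : P →+ A, r.comp d = v := by
  choose d hd using hv
  let d' : P →+ A :=
    { toFun := d
      map_zero' := hr.injective (by rw [hd, map_zero, map_zero])
      map_add' := fun x y => hr.injective (by rw [hd, map_add, map_add, hd, hd]) }
  refine ⟨d', AddMonoidHom.ext hd, fun d'' hd'' => AddMonoidHom.ext fun p => hr.injective ?_⟩
  exact (DFunLike.congr_fun hd'' p).trans (hd p).symm

theorem leftOrthToEquifibered_of_forall_exists_add {P : Type} [AddCommMonoid P] (l : M →+ P)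
    (hl : ∀ p : P, ∃ p' m, l m = p + p') : LeftOrthToEquifibered l := by
  intro A B _ _ r hr u v hsq
  have hv : ∀ p, v p ∈ Set.range r := by
    intro p
    obtain ⟨p', m, hm⟩ := hl p
    refine hr.isSummandClosed_range (v p) (v p') ⟨u m, ?_⟩
    rw [← map_add, ← hm]
    exact (DFunLike.congr_fun hsq m).symm
  obtain ⟨d, hd, hd_unique⟩ := hr.existsUnique_lift v hv
  refine ⟨d, ⟨AddMonoidHom.ext fun m => hr.injective ?_, hd⟩, fun d' hd' => hd_unique d' hd'.2⟩
  rw [← AddMonoidHom.comp_apply r, ← AddMonoidHom.comp_apply r, ← AddMonoidHom.comp_assoc, hd, hsq]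

theorem exists_leftOrthToEquifibered_comp_equifibered (f : M →+ N) :
    ∃ (P : Type) (_ : AddCommMonoid P) (l : M →+ P) (r : P →+ N),
      r.comp l = f ∧ LeftOrthToEquifibered l ∧ Equifibered r := by
  let l : M →+ summandClosure f := f.codRestrict _ (mem_summandClosure f)
  refine ⟨summandClosure f, inferInstance, l, (summandClosure f).subtype, rfl,
    leftOrthToEquifibered_of_forall_exists_add l ?_,
    AddSubmonoid.equifibered_subtype (isSummandClosed_summandClosure f)⟩
  rintro ⟨n, n', m, hm⟩
  have hn' : n' ∈ summandClosure f := isSummandClosed_summandClosure f n' n (by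
    rw [add_comm]; exact hm ▸ mem_summandClosure f m)
  exact ⟨⟨n', hn'⟩, m, Subtype.ext hm⟩

end Factorization

section Free

theorem AddMonoidHom.bijective_mrangeRestrict {A C : Type*} [AddCommMonoid A] [AddCommMonoid C]
    {i : A →+ C} (hi : Function.Injective i) : Function.Bijective i.mrangeRestrict :=
  ⟨fun _ _ h => hi (congrArg Subtype.val h), i.mrangeRestrict_surjective⟩

theorem nonempty_addEquiv_of_range_eq {A B C : Type*} [AddCommMonoid A] [AddCommMonoid B]
    [AddCommMonoid C] {i : A →+ C} {j : B →+ C} (hi : Function.Injective i)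
    (hj : Function.Injective j) (h : Set.range i = Set.range j) : Nonempty (A ≃+ B) := by
  have hrange : AddMonoidHom.mrange i = AddMonoidHom.mrange j := SetLike.coe_injective (by
    simpa only [AddMonoidHom.coe_mrange] using h)
  exact ⟨(AddEquiv.ofBijective _ (AddMonoidHom.bijective_mrangeRestrict hi)).trans
    ((AddEquiv.addSubmonoidCongr hrange).trans
      (AddEquiv.ofBijective _ (AddMonoidHom.bijective_mrangeRestrict hj)).symm)⟩

theorem Multiset.range_map_subtype_val {α : Type*} (p : α → Prop) :
    Set.range (Multiset.map (Subtype.val : Subtype p → α)) = {t | ∀ a ∈ t, p a} := by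
  ext t
  refine ⟨?_, fun ht => ?_⟩
  · rintro ⟨t, rfl⟩ a ha
    obtain ⟨a, -, rfl⟩ := Multiset.mem_map.1 ha
    exact a.2
  · lift t to Multiset (Subtype p) using ht
    exact ⟨t, rfl⟩

theorem IsSummandClosed.mem_iff_forall_singleton_mem {α : Type*} {S : AddSubmonoid (Multiset α)}
    (hS : IsSummandClosed (S : Set (Multiset α))) {t : Multiset α} :
    t ∈ S ↔ ∀ a ∈ t, {a} ∈ S := by
  classical
  refine ⟨fun ht a ha => hS {a} (t.erase a) ?_, fun ht => ?_⟩
  · rwa [Multiset.singleton_add, Multiset.cons_erase ha]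
  · induction t using Multiset.induction with
    | empty => exact S.zero_mem
    | cons a t ih =>
      rw [← Multiset.singleton_add]
      exact S.add_mem (ht a (Multiset.mem_cons_self a t))
        (ih fun b hb => ht b (Multiset.mem_cons_of_mem hb))

theorem Equifibered.isFreeCommMonoid_of_multiset {M S : Type} [AddCommMonoid M]
    {F : M →+ Multiset S} (hF : Equifibered F) : IsFreeCommMonoid M := by
  let T := {s : S // {s} ∈ Set.range F}
  have hclosed : IsSummandClosed (AddMonoidHom.mrange F : Set (Multiset S)) := by
    simpa only [AddMonoidHom.coe_mrange] using hF.isSummandClosed_range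
  have hrange : Set.range F = Set.range (Multiset.mapAddMonoidHom (Subtype.val : T → S)) := by
    ext t
    rw [Multiset.coe_mapAddMonoidHom, Multiset.range_map_subtype_val, ← AddMonoidHom.coe_mrange]
    exact hclosed.mem_iff_forall_singleton_mem
  exact ⟨T, nonempty_addEquiv_of_range_eq hF.injective
    (Multiset.map_injective Subtype.val_injective) hrange⟩

theorem Equifibered.isFreeCommMonoid {M N : Type} [AddCommMonoid M] [AddCommMonoid N]
    {f : M →+ N} (hf : Equifibered f) (hN : IsFreeCommMonoid N) : IsFreeCommMonoid M := by
  obtain ⟨S, ⟨e⟩⟩ := hN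
  exact (e.equifibered.comp hf).isFreeCommMonoid_of_multiset

end Free

/-- Equifibered morphisms of commutative monoids form the right class of a
factorization system: they are stable under composition and base change, every map
factors as a map left orthogonal to all equifibered maps followed by an equifibered
map; moreover an equifibered map with free target has free source. -/
theorem stmt_13 :
    (∀ {M N P : Type} [AddCommMonoid M] [AddCommMonoid N] [AddCommMonoid P]
      (f : M →+ N) (g : N →+ P), Equifibered f → Equifibered g → Equifibered (g.comp f)) ∧
    (∀ {M N P : Type} [AddCommMonoid M] [AddCommMonoid N] [AddCommMonoid P]
      (f : M →+ N) (g : P →+ N), Equifibered f →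
        Equifibered ((AddMonoidHom.snd M P).comp (pullbackMonoid f g).subtype)) ∧
    (∀ {M N : Type} [AddCommMonoid M] [AddCommMonoid N] (f : M →+ N),
      ∃ (P : Type) (_ : AddCommMonoid P) (l : M →+ P) (r : P →+ N),
        r.comp l = f ∧ LeftOrthToEquifibered l ∧ Equifibered r) ∧
    (∀ {M N : Type} [AddCommMonoid M] [AddCommMonoid N] (f : M →+ N),
      Equifibered f → IsFreeCommMonoid N → IsFreeCommMonoid M) :=
  ⟨fun _ _ hf hg => hg.comp hf, fun _ g hf => hf.pullback_snd g,
    exists_leftOrthToEquifibered_comp_equifibered, fun _ hf hN => hf.isFreeCommMonoid hN⟩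
end

section
/- For a 1-category version of Lemma 2.11: in the category of sets, a pullback-stable class argument shows that for commutative monoids in sets, if f : M → N is equifibered, then for any two elements m, m' ∈ M with f(m) + f(m') = f(m''), there exist unique m₁, m₂ ∈ M with m₁ + m₂ = m'' and f(m₁) = f(m), f(m₂) = f(m'). In particular, an equifibered map into a free commutative monoid ℕ^{(S)} exhibits its source as free on the preimage of the generators. -/
namespace Equifibered

variable {M N : Type*} [AddCommMonoid M] [AddCommMonoid N] {f : M →+ N}

theorem eq_zero_of_map_eq_zero (hf : Equifibered f) {m : M} (hm : f m = 0) : m = 0 := by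
  obtain ⟨p, -, hu⟩ := hf m 0 0 (by rw [hm, add_zero])
  have h₁ := hu (0, m) ⟨zero_add m, map_zero f, hm⟩
  have h₂ := hu (m, 0) ⟨add_zero m, hm, map_zero f⟩
  exact congrArg Prod.fst (h₂.trans h₁.symm)

theorem existsUnique_multiset_lift (hf : Equifibered f) (t : Multiset N) (m : M)
    (h : f m = t.sum) : ∃! T : Multiset M, T.map f = t ∧ T.sum = m := by
  induction t using Multiset.induction generalizing m with
  | empty =>
    exact ⟨0, ⟨rfl, (hf.eq_zero_of_map_eq_zero h).symm⟩,
      fun T hT => Multiset.map_eq_zero.mp hT.1⟩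
  | cons n t ih =>
    obtain ⟨⟨m₁, m₂⟩, ⟨hm, hm₁, hm₂⟩, hu⟩ := hf m n t.sum (by rw [h, Multiset.sum_cons])
    obtain ⟨T, ⟨hTmap, hTsum⟩, hTu⟩ := ih m₂ hm₂
    refine ⟨m₁ ::ₘ T, ⟨by simp [hm₁, hTmap], by simp [hTsum, ← hm]⟩, ?_⟩
    rintro T' ⟨hT'map, hT'sum⟩
    have hn : n ∈ T'.map f := hT'map ▸ Multiset.mem_cons_self n t
    obtain ⟨a, ha, rfl⟩ := Multiset.mem_map.mp hn
    obtain ⟨R, rfl⟩ := Multiset.exists_cons_of_mem ha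
    have hRmap : R.map f = t := by
      rwa [Multiset.map_cons, Multiset.cons_inj_right] at hT'map
    have hpair : (a, R.sum) = (m₁, m₂) :=
      hu (a, R.sum) ⟨by rwa [Multiset.sum_cons] at hT'sum, rfl, by rw [map_multiset_sum, hRmap]⟩
    simp only [Prod.mk.injEq] at hpair
    rw [hpair.1, hTu R ⟨hRmap, hpair.2⟩]

theorem bijective_multiset_sum_preimage (hf : Equifibered f) {P : N → Prop}
    (hP : Function.Bijective fun t : Multiset {n // P n} => (t.map Subtype.val).sum) :
    Function.Bijective fun t : Multiset {m // P (f m)} => (t.map Subtype.val).sum := by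
  let φ : {m // P (f m)} → {n // P n} := fun g => ⟨f g, g.2⟩
  have hmap (t : Multiset {m // P (f m)}) :
      (t.map Subtype.val).map f = (t.map φ).map Subtype.val := by
    simp only [Multiset.map_map]; rfl
  constructor
  · intro t₁ t₂ h
    have hφ : t₁.map φ = t₂.map φ := hP.1 <| by
      simp only at h ⊢
      rw [← hmap, ← hmap, ← map_multiset_sum, ← map_multiset_sum, h]
    apply Multiset.map_injective Subtype.val_injective
    exact (hf.existsUnique_multiset_lift _ _ (map_multiset_sum f _)).unique ⟨rfl, rfl⟩
      ⟨by rw [hmap, hmap, hφ], h.symm⟩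
  · intro m
    obtain ⟨u, hu⟩ := hP.2 (f m)
    obtain ⟨T, ⟨hTmap, hTsum⟩, -⟩ := hf.existsUnique_multiset_lift (u.map Subtype.val) m hu.symm
    have hT (x : M) (hx : x ∈ T) : P (f x) := by
      obtain ⟨n, -, hn⟩ := Multiset.mem_map.mp (hTmap ▸ Multiset.mem_map_of_mem f hx)
      exact hn ▸ n.2
    refine ⟨T.pmap Subtype.mk hT, ?_⟩
    simp only [Multiset.map_pmap, Multiset.pmap_eq_map, Multiset.map_id', hTsum]

end Equifibered

theorem Finsupp.bijective_multiset_sum_single_one (S : Type*) :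
    Function.Bijective fun t : Multiset {n : S →₀ ℕ // ∃ s, n = Finsupp.single s 1} =>
      (t.map Subtype.val).sum := by
  classical
  let e : S → {n : S →₀ ℕ // ∃ s, n = Finsupp.single s 1} := fun s => ⟨single s 1, s, rfl⟩
  have he : Function.Bijective e :=
    ⟨fun s s' h => single_left_injective one_ne_zero (congrArg Subtype.val h),
      fun ⟨_, s, hs⟩ => ⟨s, Subtype.ext hs.symm⟩⟩
  rw [← Function.Bijective.of_comp_iff _
    ⟨Multiset.map_injective he.1, Multiset.map_surjective_of_surjective he.2⟩]
  have hsum : (fun t => (t.map Subtype.val).sum) ∘ Multiset.map e = Multiset.toFinsupp := by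
    funext u
    induction u using Multiset.induction with
    | empty => simp
    | cons s u ih =>
      rw [← Multiset.singleton_add, map_add, Multiset.toFinsupp_singleton, ← ih]
      simp [e]
  rw [hsum]
  exact Multiset.toFinsupp.bijective

/-- 1-categorical version: if `f : M → N` is an equifibered map of commutative monoids
in `Set`, then for any `m, m', m'' ∈ M` with `f m + f m' = f m''` there are unique
`m₁, m₂ ∈ M` with `m₁ + m₂ = m''`, `f m₁ = f m`, `f m₂ = f m'`.  In particular, an
equifibered map into a free commutative monoid `ℕ^{(S)}` exhibits its source as free
on the preimage of the generators: the canonical summation map from multisets over the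
preimage of the generators is a bijection. -/
theorem stmt_14 :
    (∀ {M N : Type} [AddCommMonoid M] [AddCommMonoid N] (f : M →+ N),
      Equifibered f → ∀ m m' m'' : M, f m + f m' = f m'' →
        ∃! p : M × M, p.1 + p.2 = m'' ∧ f p.1 = f m ∧ f p.2 = f m') ∧
    (∀ {M : Type} [AddCommMonoid M] (S : Type) (f : M →+ (S →₀ ℕ)),
      Equifibered f →
        Function.Bijective
          (fun t : Multiset {m : M // ∃ s : S, f m = Finsupp.single s 1} =>
            (t.map Subtype.val).sum)) :=
  ⟨fun f hf m m' m'' h => hf m'' (f m) (f m') h.symm,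
    fun S _ hf => hf.bijective_multiset_sum_preimage (Finsupp.bijective_multiset_sum_single_one S)⟩
end
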